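/- arXiv:2009.12889 — 9 statements merged into one kernel-verified Lean document; each statement's English description precedes it below -/
import Mathlib

section
/- For every ordinal α with 1 ≤ α < ω₁ there exists a closed set F ⊆ 2^ω × ω^ω such that every section F_x (x ∈ 2^ω) contains at most one point and for every sequence of partial functions f_n : H_n → ω^ω with H_n ⊆ 2^ω whose graphs satisfy ⋃_{n∈ℕ} graph(f_n) = F, at least one f_n fails to be Σ⁰_α-measurable, i.e., for some n there exists an open set V ⊆ ω^ω such that f_n⁻¹(V) is not of the form H_n ∩ S for any S in the additive Borel class Σ⁰_α(2^ω). -/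
/-- The additive Borel class `Σ⁰_α(Z)` of a topological space `Z`. -/
noncomputable def Sigma0 (Z : Type*) [TopologicalSpace Z] (α : Ordinal) : Set (Set Z) :=
  {s | (α = 1 ∧ IsOpen s) ∨
       (1 < α ∧ ∃ A : ℕ → Set Z, ∃ β : ℕ → Ordinal,
          (∀ n : ℕ, 1 ≤ β n ∧ ∃ hb : β n < α, A n ∈ Sigma0 Z (β n)) ∧ s = ⋃ n, (A n)ᶜ)}
termination_by α
decreasing_by exact hb

/-!
Let `W ⊆ 2^ω × 2^ω` be a Borel set whose sections are exactly the `Σ⁰_α` sets, and let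
`Dₙ = {x | (xₙ, x) ∈ W}`, where `xₙ` is the `n`-th row of `x` under `ℕ ≃ ℕ × ℕ`. Any sequence
`(Sₙ)` of `Σ⁰_α` sets is diagonalised by the point `x` whose rows code the `Sₙ`: `x ∈ Dₙ ↔ x ∈ Sₙ`
for all `n`.

The indicator `g x n = [x ∉ Dₙ]` is Borel, and a Borel subset of a zero-dimensional Polish space
`Z` is the one-to-one projection of a closed subset of `Z × ω^ω`. Interleaving `g x` with the
unique witness for `(x, g x)` in the graph of `g` gives `h : 2^ω → ω^ω` with closed graph `F` and
`h x (2n) = g x n`. If `F` were the union of the graphs of `Σ⁰_α`-measurable `fₙ`, choose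
`Sₙ ∈ Σ⁰_α` with `fₙ⁻¹{v | v (2n) = 1} = Hₙ ∩ Sₙ` and the diagonal point `x` for them; for the `n`
with `fₙ x = h x` this gives `x ∈ Sₙ ↔ h x (2n) = 1 ↔ x ∉ Dₙ ↔ x ∉ Sₙ`.
-/

open Set Function TopologicalSpace MeasureTheory

def rowsEquiv (α : Type*) : (ℕ → α) ≃ (ℕ → ℕ → α) where
  toFun w n k := w (Nat.pair n k)
  invFun v m := v (Nat.unpair m).1 (Nat.unpair m).2
  left_inv w := funext fun m => by simp
  right_inv v := funext₂ fun n k => by simp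

lemma continuous_rowsEquiv_apply {α : Type*} [TopologicalSpace α] (n : ℕ) :
    Continuous fun w : ℕ → α => rowsEquiv α w n :=
  continuous_pi fun _ => continuous_apply _

lemma measurable_rowsEquiv_apply {α : Type*} [MeasurableSpace α] (n : ℕ) :
    Measurable fun w : ℕ → α => rowsEquiv α w n :=
  measurable_pi_lambda _ fun _ => measurable_pi_apply _

def evenOddEquiv (α : Type*) : (ℕ → α) ≃ (ℕ → α) × (ℕ → α) where
  toFun w := (fun n => w (2 * n), fun n => w (2 * n + 1))
  invFun v m := if m % 2 = 0 then v.1 (m / 2) else v.2 (m / 2)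
  left_inv w := funext fun m => by
    obtain ⟨n, rfl | rfl⟩ := Nat.even_or_odd' m <;> simp [Nat.mul_add_div]
  right_inv v := by ext n <;> simp [Nat.mul_add_div]

lemma continuous_evenOddEquiv {α : Type*} [TopologicalSpace α] :
    Continuous (evenOddEquiv α) :=
  (continuous_pi fun _ => continuous_apply _).prodMk (continuous_pi fun _ => continuous_apply _)

section InjProj

variable {Z : Type*} [TopologicalSpace Z]

-- By the Lusin–Souslin theorem, for Polish `Z` these are exactly the Borel sets.
def IsInjProjOfClosed (B : Set Z) : Prop :=
  ∃ C : Set (Z × (ℕ → ℕ)), IsClosed C ∧ (∀ z, {w | (z, w) ∈ C}.Subsingleton) ∧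
    ∀ z, z ∈ B ↔ ∃ w, (z, w) ∈ C

namespace IsInjProjOfClosed

lemma of_isClosed {B : Set Z} (hB : IsClosed B) : IsInjProjOfClosed B :=
  ⟨B ×ˢ {0}, hB.prod isClosed_singleton, fun _ _ hv _ hw => hv.2.trans hw.2.symm,
    fun _ => ⟨fun hz => ⟨0, hz, rfl⟩, fun ⟨_, hz, _⟩ => hz⟩⟩

lemma preimage {Y : Type*} [TopologicalSpace Y] {B : Set Z} (hB : IsInjProjOfClosed B)
    {g : Y → Z} (hg : Continuous g) : IsInjProjOfClosed (g ⁻¹' B) := by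
  obtain ⟨C, hC, hsub, hproj⟩ := hB
  exact ⟨Prod.map g id ⁻¹' C, hC.preimage (hg.prodMap continuous_id), fun y => hsub (g y),
    fun y => hproj (g y)⟩

lemma iInter {B : ℕ → Set Z} (hB : ∀ n, IsInjProjOfClosed (B n)) :
    IsInjProjOfClosed (⋂ n, B n) := by
  choose C hC hsub hproj using hB
  refine ⟨{p | ∀ n, (p.1, rowsEquiv ℕ p.2 n) ∈ C n}, ?_, fun z w hw w' hw' => ?_, fun z => ?_⟩
  · simp only [ofPred_forall]
    exact isClosed_iInter fun n => (hC n).preimage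
      (continuous_fst.prodMk ((continuous_rowsEquiv_apply n).comp continuous_snd))
  · exact (rowsEquiv ℕ).injective (funext fun n => hsub n z (hw n) (hw' n))
  · simp only [mem_iInter, hproj]
    refine ⟨fun h => ?_, fun ⟨w, hw⟩ n => ⟨_, hw n⟩⟩
    choose v hv using h
    exact ⟨(rowsEquiv ℕ).symm v, fun n => by simpa using hv n⟩

lemma iUnion {B : ℕ → Set Z} (hB : ∀ n, IsInjProjOfClosed (B n))
    (hd : Pairwise (Disjoint on B)) : IsInjProjOfClosed (⋃ n, B n) := by
  choose C hC hsub hproj using hB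
  -- a witness is the index of the piece containing `z` followed by a witness in that piece
  refine ⟨{p | (p.1, fun k => p.2 (k + 1)) ∈ C (p.2 0)}, ?_, fun z w hw w' hw' => ?_,
    fun z => ?_⟩
  · have : {p : Z × (ℕ → ℕ) | (p.1, fun k => p.2 (k + 1)) ∈ C (p.2 0)} =
        ⋂ n, {p | p.2 0 = n → (p.1, fun k => p.2 (k + 1)) ∈ C n} := by
      ext p; simp
    rw [this]
    refine isClosed_iInter fun n => isClosed_imp ?_ ((hC n).preimage ?_)
    · exact (isOpen_discrete {n}).preimage (f := fun p : Z × (ℕ → ℕ) => p.2 0) (by fun_prop)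
    · fun_prop
  · have h0 : w 0 = w' 0 :=
      hd.eq (not_disjoint_iff.2 ⟨z, (hproj _ z).2 ⟨_, hw⟩, (hproj _ z).2 ⟨_, hw'⟩⟩)
    simp only [mem_ofPred_eq, h0] at hw hw'
    exact funext fun k => Nat.casesOn k h0 (congrFun (hsub _ z hw hw'))
  · simp only [mem_iUnion, hproj]
    refine ⟨fun ⟨n, w, hw⟩ => ⟨Stream'.cons n w, hw⟩, fun ⟨w, hw⟩ => ⟨w 0, _, hw⟩⟩

end IsInjProjOfClosed

end InjProj

section InjProjSigma

variable (Z : Type*) [TopologicalSpace Z]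

abbrev injProjMeasurableSpace : MeasurableSpace Z where
  MeasurableSet' B := IsInjProjOfClosed B ∧ IsInjProjOfClosed Bᶜ
  measurableSet_empty :=
    ⟨.of_isClosed isClosed_empty, by simpa using IsInjProjOfClosed.of_isClosed isClosed_univ⟩
  measurableSet_compl _ hB := ⟨hB.2, by rw [compl_compl]; exact hB.1⟩
  measurableSet_iUnion B hB := by
    refine ⟨?_, by simpa only [compl_iUnion] using IsInjProjOfClosed.iInter fun n => (hB n).2⟩
    rw [← iUnion_disjointed]
    refine .iUnion (fun n => ?_) (disjoint_disjointed B)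
    have : disjointed B n = ⋂ j, if j < n then (B j)ᶜ else B n := by
      ext z
      simp only [disjointed_eq_inter_compl, mem_inter_iff, mem_iInter]
      refine ⟨fun ⟨hn, hlt⟩ j => ?_,
        fun h => ⟨by simpa using h n, fun j hj => by simpa [hj] using h j⟩⟩
      split_ifs with hj
      exacts [hlt j hj, hn]
    rw [this]
    exact .iInter fun j => by split_ifs; exacts [(hB j).2, (hB n).1]

variable {Z}

lemma IsClopen.measurableSet_injProj {B : Set Z} (hB : IsClopen B) :
    MeasurableSet[injProjMeasurableSpace Z] B :=
  ⟨.of_isClosed hB.isClosed, .of_isClosed hB.compl.isClosed⟩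

lemma Continuous.measurable_injProj {Y : Type*} [TopologicalSpace Y] {g : Y → Z}
    (hg : Continuous g) :
    Measurable[injProjMeasurableSpace Y, injProjMeasurableSpace Z] g :=
  fun _ hB => ⟨hB.1.preimage hg, hB.2.preimage hg⟩

lemma borel_le_injProjMeasurableSpace [SecondCountableTopology Z]
    (hZ : IsTopologicalBasis {s : Set Z | IsClopen s}) : borel Z ≤ injProjMeasurableSpace Z := by
  refine MeasurableSpace.generateFrom_le fun U hU => ?_
  obtain ⟨S, hS, rfl⟩ := hZ.open_eq_sUnion hU
  obtain ⟨T, hT, hTS, hTU⟩ := isOpen_sUnion_countable S fun s hs => (hS hs).isOpen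
  rw [← hTU]
  exact .sUnion hT fun s hs => (hS (hTS hs)).measurableSet_injProj

lemma measurableSet_injProj_graph {g : Z → ℕ → ℕ}
    (hg : Measurable[injProjMeasurableSpace Z] g) :
    MeasurableSet[injProjMeasurableSpace (Z × (ℕ → ℕ))] {p | p.2 = g p.1} := by
  let := injProjMeasurableSpace (Z × (ℕ → ℕ))
  have hsnd : Measurable fun p : Z × (ℕ → ℕ) => p.2 := by
    refine measurable_pi_lambda _ fun n => measurable_to_countable' fun k => ?_
    exact ((isClopen_discrete {k}).preimage
      (by fun_prop : Continuous fun p : Z × (ℕ → ℕ) => p.2 n)).measurableSet_injProj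
  refine measurableSet_eq_fun hsnd (hg.comp ?_)
  exact continuous_fst.measurable_injProj

theorem exists_isClosed_graph_lift {g : Z → ℕ → ℕ}
    (hg : Measurable[injProjMeasurableSpace Z] g) :
    ∃ h : Z → ℕ → ℕ, IsClosed {p : Z × (ℕ → ℕ) | p.2 = h p.1} ∧ ∀ z n, h z (2 * n) = g z n := by
  obtain ⟨C, hC, hsub, hproj⟩ := (measurableSet_injProj_graph hg).1
  choose w hw using fun z => (hproj (z, g z)).1 rfl
  refine ⟨fun z => (evenOddEquiv ℕ).symm (g z, w z), ?_, fun z n => ?_⟩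
  · have : {p : Z × (ℕ → ℕ) | p.2 = (evenOddEquiv ℕ).symm (g p.1, w p.1)} =
        (fun p => ((p.1, (evenOddEquiv ℕ p.2).1), (evenOddEquiv ℕ p.2).2)) ⁻¹' C := by
      ext ⟨z, u⟩
      simp only [mem_ofPred_eq, mem_preimage, Equiv.eq_symm_apply]
      refine ⟨fun h => h ▸ hw z, fun h => ?_⟩
      have hg : (evenOddEquiv ℕ u).1 = g z := (hproj _).2 ⟨_, h⟩
      rw [hg] at h
      exact Prod.ext hg (hsub _ h (hw z))
    rw [this]
    have := continuous_evenOddEquiv.comp (continuous_snd (X := Z) (Y := ℕ → ℕ))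
    exact hC.preimage ((continuous_fst.prodMk this.fst).prodMk this.snd)
  · exact congrFun (congrArg Prod.fst ((evenOddEquiv ℕ).apply_symm_apply (g z, w z))) n

end InjProjSigma

section Sigma0

variable {Z : Type*} [TopologicalSpace Z]

lemma mem_Sigma0_iff {α : Ordinal} {s : Set Z} :
    s ∈ Sigma0 Z α ↔ (α = 1 ∧ IsOpen s) ∨
      (1 < α ∧ ∃ A : ℕ → Set Z, ∃ β : ℕ → Ordinal,
        (∀ n, 1 ≤ β n ∧ ∃ _ : β n < α, A n ∈ Sigma0 Z (β n)) ∧ s = ⋃ n, (A n)ᶜ) := by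
  rw [Sigma0]; rfl

lemma univ_mem_Sigma0 {α : Ordinal} (hα : 1 ≤ α) : (univ : Set Z) ∈ Sigma0 Z α := by
  rcases hα.eq_or_lt with rfl | hα
  · exact mem_Sigma0_iff.2 (.inl ⟨rfl, isOpen_univ⟩)
  · refine mem_Sigma0_iff.2 (.inr ⟨hα, fun _ => ∅, fun _ => 1, fun _ => ⟨le_rfl, hα, ?_⟩,
      by simp only [compl_empty, iUnion_const]⟩)
    exact mem_Sigma0_iff.2 (.inl ⟨rfl, isOpen_empty⟩)

end Sigma0

-- The fallback is only taken for uncountable `α`.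
open Classical in
noncomputable def ordEnum {α : Ordinal} (h : 1 < α) : ℕ → Ico (1 : Ordinal) α :=
  if hs : ∃ e : ℕ → Ico (1 : Ordinal) α, Surjective e then hs.choose
  else fun _ => ⟨1, le_rfl, h⟩

lemma ordEnum_surjective {α : Ordinal} (h : 1 < α) (hα : α < (Cardinal.aleph 1).ord) :
    Surjective (ordEnum h) := by
  have : Countable (Ico (1 : Ordinal) α) := by
    refine (Set.Countable.mono Ico_subset_Iio_self ?_).to_subtype
    rw [← Cardinal.le_aleph0_iff_set_countable, Cardinal.mk_Iio_ordinal, Cardinal.lift_le_aleph0,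
      ← Cardinal.lt_aleph_one_iff]
    exact Cardinal.lt_ord.1 hα
  have : Nonempty (Ico (1 : Ordinal) α) := ⟨⟨1, le_rfl, h⟩⟩
  have hs := exists_surjective_nat (Ico (1 : Ordinal) α)
  rw [ordEnum, dif_pos hs]
  exact hs.choose_spec

section UniversalSet

variable (Z : Type*) [TopologicalSpace Z] [SecondCountableTopology Z]

/- At level `1` the bits of a code select basic open sets. Above it, row `(n, k)` of the code of
`⋃ n, (A n)ᶜ` codes `A n` if `ordEnum h k` is the level of `A n`, and `univ` otherwise, so that it
adds nothing to the union. -/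
def universalSet (α : Ordinal) : Set ((ℕ → Bool) × Z) :=
  if h : 1 < α then
    {p | ∃ n k, (rowsEquiv Bool (rowsEquiv Bool p.1 n) k, p.2) ∉ universalSet (ordEnum h k).1}
  else {p | ∃ s : countableBasis Z, p.1 (Encodable.encode s) = true ∧ p.2 ∈ (s : Set Z)}
termination_by α
decreasing_by exact (ordEnum h k).2.2

lemma measurableSet_universalSet [MeasurableSpace Z] [OpensMeasurableSpace Z] (α : Ordinal) :
    MeasurableSet (universalSet Z α) := by
  induction α using WellFoundedLT.induction with
  | _ α ih =>
    rw [universalSet]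
    split_ifs with h
    · simp only [ofPred_exists]
      refine .iUnion fun n => .iUnion fun k => (ih _ (ordEnum h k).2.2).compl.preimage ?_
      exact ((measurable_rowsEquiv_apply k).comp
        ((measurable_rowsEquiv_apply n).comp measurable_fst)).prodMk measurable_snd
    · simp only [ofPred_exists]
      refine .iUnion fun s => .inter ?_ ?_
      · exact measurableSet_eq_fun (by fun_prop) measurable_const
      · exact measurable_snd ((isBasis_countableBasis Z).isOpen s.2).measurableSet

variable {Z}

lemma exists_section_universalSet_one_eq {U : Set Z} (hU : IsOpen U) :
    ∃ e : ℕ → Bool, {x | (e, x) ∈ universalSet Z 1} = U := by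
  classical
  refine ⟨fun m => decide (∃ s : countableBasis Z, Encodable.encode s = m ∧ (s : Set Z) ⊆ U), ?_⟩
  rw [universalSet, dif_neg (lt_irrefl 1)]
  ext x
  simp only [mem_ofPred_eq, decide_eq_true_eq]
  constructor
  · rintro ⟨s, ⟨t, hts, htU⟩, hx⟩
    exact htU (Encodable.encode_injective hts ▸ hx)
  · intro hx
    obtain ⟨s, hs, hxs, hsU⟩ := (isBasis_countableBasis Z).exists_subset_of_mem_open hx hU
    exact ⟨⟨s, hs⟩, ⟨⟨s, hs⟩, rfl, hsU⟩, hxs⟩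

theorem exists_section_universalSet_eq {α : Ordinal} (hα : α < (Cardinal.aleph 1).ord)
    {S : Set Z} (hS : S ∈ Sigma0 Z α) : ∃ e : ℕ → Bool, {x | (e, x) ∈ universalSet Z α} = S := by
  induction α using WellFoundedLT.induction generalizing S with
  | _ α ih =>
  rcases mem_Sigma0_iff.1 hS with ⟨rfl, hU⟩ | ⟨h, A, β, hA, rfl⟩
  · exact exists_section_universalSet_one_eq hU
  choose hβ1 hβα hAβ using hA
  have hlt k : ((ordEnum h k).1 : Ordinal) < (Cardinal.aleph 1).ord := (ordEnum h k).2.2.trans hα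
  choose c hc using fun n => ih _ (hβα n) ((hβα n).trans hα) (hAβ n)
  choose u hu using fun k => ih _ (ordEnum h k).2.2 (hlt k) (univ_mem_Sigma0 (ordEnum h k).2.1)
  classical
  refine ⟨(rowsEquiv Bool).symm fun n => (rowsEquiv Bool).symm fun k =>
    if (ordEnum h k).1 = β n then c n else u k, ?_⟩
  rw [universalSet, dif_pos h]
  ext x
  simp only [mem_ofPred_eq, Equiv.apply_symm_apply, mem_iUnion, mem_compl_iff]
  constructor
  · rintro ⟨n, k, hx⟩
    split_ifs at hx with hk
    · exact ⟨n, by rw [← hc n, mem_ofPred_eq, ← hk]; exact hx⟩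
    · exact absurd ((Set.ext_iff.1 (hu k) x).2 (mem_univ x)) hx
  · rintro ⟨n, hx⟩
    obtain ⟨k, hk⟩ := ordEnum_surjective h hα ⟨β n, hβ1 n, hβα n⟩
    refine ⟨n, k, ?_⟩
    rw [hk, if_pos rfl]
    rwa [← hc n] at hx

end UniversalSet

def diagonalSet (α : Ordinal) (n : ℕ) : Set (ℕ → Bool) :=
  {x | (rowsEquiv Bool x n, x) ∈ universalSet (ℕ → Bool) α}

lemma measurableSet_diagonalSet (α : Ordinal) (n : ℕ) : MeasurableSet (diagonalSet α n) :=
  (measurableSet_universalSet _ α).preimage ((measurable_rowsEquiv_apply n).prodMk measurable_id)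

theorem exists_forall_mem_diagonalSet_iff {α : Ordinal} (hα : α < (Cardinal.aleph 1).ord)
    {S : ℕ → Set (ℕ → Bool)} (hS : ∀ n, S n ∈ Sigma0 (ℕ → Bool) α) :
    ∃ x, ∀ n, x ∈ diagonalSet α n ↔ x ∈ S n := by
  choose c hc using fun n => exists_section_universalSet_eq hα (hS n)
  refine ⟨(rowsEquiv Bool).symm c, fun n => ?_⟩
  rw [← hc n, diagonalSet, mem_ofPred_eq, mem_ofPred_eq, Equiv.apply_symm_apply]

/-- A partial function with domain `H n ⊆ 2^ω` is represented by a total function `f n`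
restricted to `H n`. -/
theorem no_cover_by_graphs_of_Sigma0_measurable_functions_general
    (α : Ordinal) (hα2 : α < (Cardinal.aleph 1).ord) :
    ∃ F : Set ((ℕ → Bool) × (ℕ → ℕ)),
      IsClosed F ∧
      (∀ x : ℕ → Bool, {y : ℕ → ℕ | (x, y) ∈ F}.Subsingleton) ∧
      ∀ (H : ℕ → Set (ℕ → Bool)) (f : ℕ → (ℕ → Bool) → (ℕ → ℕ)),
        (⋃ n, {p : (ℕ → Bool) × (ℕ → ℕ) | p.1 ∈ H n ∧ p.2 = f n p.1}) = F →
        ∃ n : ℕ, ∃ V : Set (ℕ → ℕ), IsOpen V ∧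
          ∀ S ∈ Sigma0 (ℕ → Bool) α, {x | x ∈ H n ∧ f n x ∈ V} ≠ H n ∩ S := by
  classical
  let g : (ℕ → Bool) → ℕ → ℕ := fun x n => if x ∈ diagonalSet α n then 0 else 1
  have hg : Measurable g := measurable_pi_lambda _ fun n =>
    Measurable.ite (measurableSet_diagonalSet α n) measurable_const measurable_const
  have hle : MeasurableSpace.pi ≤ injProjMeasurableSpace (ℕ → Bool) :=
    BorelSpace.measurable_eq.trans_le (borel_le_injProjMeasurableSpace isTopologicalBasis_isClopen)
  obtain ⟨h, hclosed, hlift⟩ := exists_isClosed_graph_lift (hg.mono hle le_rfl)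
  refine ⟨{p | p.2 = h p.1}, hclosed, fun x u hu v hv => hu.trans hv.symm, fun H f hcover => ?_⟩
  by_contra! hmeas
  choose S hS hSeq using fun n => hmeas n {v | v (2 * n) = 1}
    ((isOpen_discrete {1}).preimage (continuous_apply (2 * n)))
  obtain ⟨x, hx⟩ := exists_forall_mem_diagonalSet_iff hα2 hS
  have hxF : (x, h x) ∈ ⋃ n, {p : (ℕ → Bool) × (ℕ → ℕ) | p.1 ∈ H n ∧ p.2 = f n p.1} :=
    hcover ▸ rfl
  obtain ⟨n, hxH, hfx⟩ := mem_iUnion.1 hxF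
  have hin : h x (2 * n) = 1 ↔ x ∈ S n := by
    simpa [hxH, ← hfx] using Set.ext_iff.1 (hSeq n) x
  have hout : h x (2 * n) = 1 ↔ x ∉ S n := by simp [hlift, g, hx n]
  exact iff_not_self (hin.symm.trans hout)

/-- For every countable ordinal `α ≥ 1` there is a closed set `F ⊆ 2^ω × ω^ω` with at most
one-point sections which is not a countable union of graphs of `Σ⁰_α`-measurable partial
functions.  A partial function with domain `H n ⊆ 2^ω` is represented by a total function
`f n : 2^ω → ω^ω` restricted to `H n`; its graph is `{(x, f n x) : x ∈ H n}`. -/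
theorem no_cover_by_graphs_of_Sigma0_measurable_functions
    (α : Ordinal) (hα1 : 1 ≤ α) (hα2 : α < (Cardinal.aleph 1).ord) :
    ∃ F : Set ((ℕ → Bool) × (ℕ → ℕ)),
      IsClosed F ∧
      (∀ x : ℕ → Bool, {y : ℕ → ℕ | (x, y) ∈ F}.Subsingleton) ∧
      ∀ (H : ℕ → Set (ℕ → Bool)) (f : ℕ → (ℕ → Bool) → (ℕ → ℕ)),
        (⋃ n, {p : (ℕ → Bool) × (ℕ → ℕ) | p.1 ∈ H n ∧ p.2 = f n p.1}) = F →
        ∃ n : ℕ, ∃ V : Set (ℕ → ℕ), IsOpen V ∧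
          ∀ S ∈ Sigma0 (ℕ → Bool) α, {x | x ∈ H n ∧ f n x ∈ V} ≠ H n ∩ S :=
  no_cover_by_graphs_of_Sigma0_measurable_functions_general α hα2
end

section
/- Let K ⊆ ω^ω × ω^ω be a compact set such that for every x ∈ ω^ω the section K_x contains at most two points. Then there exist sets B₀, B₁ ⊆ ω^ω × ω^ω such that K = B₀ ∪ B₁, each B_i is a G_δ subset of ω^ω × ω^ω, and for every x ∈ ω^ω each section (B_i)_x contains at most one point. -/
/-!
Order Baire space lexicographically and let `B₀` (resp. `B₁`) consist of the points of `K` that are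
least (resp. greatest) in their section. Least points are unique, and a section with at most two
points consists of its least and its greatest point. The points of `K` that are not least in their
section form `K ∩ (K ○ <lex)`, where `○` is composition of relations. Since `<lex` is open, it is a
countable union of closed relations, and composing the compact `K` with a closed relation is a
projection along a compact factor, hence closed. So `K ○ <lex` is `F_σ` and `B₀` is `G_δ`.
-/

open Set Function OrderDual
open scoped SetRel

section RelComp

variable {X Y Z : Type*} [TopologicalSpace X] [TopologicalSpace Y] [TopologicalSpace Z]

theorem IsCompact.isClosed_comp {K : SetRel X Z} {F : SetRel Z Y} (hK : IsCompact K)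
    (hKc : IsClosed K) (hF : IsClosed F) : IsClosed (K ○ F) := by
  have : CompactSpace (Prod.snd '' K) := isCompact_iff_compactSpace.mp (hK.image continuous_snd)
  have hM : IsClosed
      {q : (X × Y) × (Prod.snd '' K) | (q.1.1, (q.2 : Z)) ∈ K ∧ ((q.2 : Z), q.1.2) ∈ F} :=
    (hKc.preimage (by fun_prop)).inter (hF.preimage (by fun_prop))
  convert isClosedMap_fst_of_compactSpace _ hM using 1
  ext ⟨x, y⟩
  constructor
  · rintro ⟨z, hxz, hzy⟩
    exact ⟨((x, y), ⟨z, (x, z), hxz, rfl⟩), ⟨hxz, hzy⟩, rfl⟩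
  · rintro ⟨⟨_, z, _⟩, ⟨hxz, hzy⟩, rfl⟩
    exact ⟨z, hxz, hzy⟩

theorem IsCompact.isGδ_compl_comp [PerfectlyNormalSpace (Z × Y)] {K : SetRel X Z}
    {L : SetRel Z Y} (hK : IsCompact K) (hKc : IsClosed K) (hL : IsOpen L) :
    IsGδ (K ○ L)ᶜ := by
  obtain ⟨U, hUo, hU⟩ := isGδ_iff_eq_iInter_nat.mp hL.isClosed_compl.isGδ
  rw [← compl_compl L, hU, compl_iInter, SetRel.comp_iUnion, compl_iUnion]
  exact .iInter fun n => (hK.isClosed_comp hKc (hUo n).isClosed_compl).isOpen_compl.isGδ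

end RelComp

theorem Pi.toLex_lt_toLex_iff {ι : Type*} {β : ι → Type*} [LT ι] [∀ i, LT (β i)]
    {x y : ∀ i, β i} : toLex x < toLex y ↔ ∃ i, (∀ j < i, x j = y j) ∧ x i < y i :=
  Iff.rfl

theorem isOpen_setOf_toLex_lt {ι β : Type*} [Preorder ι] [LocallyFiniteOrderBot ι] [LT β]
    [TopologicalSpace β] [DiscreteTopology β] :
    IsOpen {q : (ι → β) × (ι → β) | toLex q.1 < toLex q.2} := by
  simp only [Pi.toLex_lt_toLex_iff]
  refine isOpen_iff_forall_mem_open.mpr fun q ⟨n, hagree, hlt⟩ => ?_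
  refine ⟨⋂ m ∈ Iic n, (fun q' => (q'.1 m, q'.2 m)) ⁻¹' {(q.1 m, q.2 m)}, fun q' hq' => ?_,
    (finite_Iic n).isOpen_biInter fun m _ => (isOpen_discrete _).preimage (by fun_prop),
    by simp⟩
  simp only [mem_iInter, mem_Iic, mem_preimage, mem_singleton_iff, Prod.mk.injEq] at hq'
  refine ⟨n, fun j hj => ?_, ?_⟩
  · rw [(hq' j hj.le).1, (hq' j hj.le).2]
    exact hagree j hj
  · rw [(hq' n le_rfl).1, (hq' n le_rfl).2]
    exact hlt

section SectionArgmin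

variable {X Y L : Type*} [LinearOrder L]

def sectionArgmin (f : Y → L) (K : Set (X × Y)) : Set (X × Y) :=
  {p ∈ K | ∀ z, (p.1, z) ∈ K → f p.2 ≤ f z}

theorem sectionArgmin_section_subsingleton {f : Y → L} (hf : Injective f) (K : Set (X × Y))
    (x : X) : {y | (x, y) ∈ sectionArgmin f K}.Subsingleton :=
  fun _ hy _ hy' => hf (le_antisymm (hy.2 _ hy'.1) (hy'.2 _ hy.1))

theorem eq_sectionArgmin_union_sectionArgmin_toDual (f : Y → L) {K : Set (X × Y)}
    (hsec : ∀ x, ∃ y z, {v | (x, v) ∈ K} ⊆ {y, z}) :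
    K = sectionArgmin f K ∪ sectionArgmin (toDual ∘ f) K := by
  refine Subset.antisymm (fun ⟨x, y⟩ hy => ?_) (union_subset (sep_subset _ _) (sep_subset _ _))
  by_contra! h
  simp only [sectionArgmin, mem_union, mem_ofPred_eq, not_or, not_and, not_forall, exists_prop,
    not_le, comp_apply, toDual_lt_toDual] at h
  obtain ⟨z, hz, hzy⟩ := h.1 hy
  obtain ⟨w, hw, hyw⟩ := h.2 hy
  obtain ⟨a, b, hab⟩ := hsec x
  rcases hab hy with rfl | rfl <;> rcases hab hz with rfl | rfl <;>
    rcases hab hw with rfl | rfl <;> order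

theorem sectionArgmin_eq (f : Y → L) (K : Set (X × Y)) :
    sectionArgmin f K = K ∩ (K ○ {q | f q.1 < f q.2})ᶜ := by
  ext ⟨x, y⟩
  simp [sectionArgmin]

theorem IsCompact.isGδ_sectionArgmin [TopologicalSpace X] [TopologicalSpace Y]
    [TopologicalSpace.MetrizableSpace X] [TopologicalSpace.MetrizableSpace Y] {f : Y → L}
    {K : Set (X × Y)} (hK : IsCompact K) (hf : IsOpen {q : Y × Y | f q.1 < f q.2}) :
    IsGδ (sectionArgmin f K) := by
  rw [sectionArgmin_eq]
  exact hK.isClosed.isGδ.inter (hK.isGδ_compl_comp hK.isClosed hf)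

end SectionArgmin

/-- A compact subset of `ω^ω × ω^ω` all of whose sections contain at most two points can be
decomposed into two `G_δ` sets with at most one-point sections. -/
theorem compact_two_point_sections_split_into_Gdelta_graphs
    (K : Set ((ℕ → ℕ) × (ℕ → ℕ))) (hK : IsCompact K)
    (hsec : ∀ x : ℕ → ℕ, ∃ y z : ℕ → ℕ, {v : ℕ → ℕ | (x, v) ∈ K} ⊆ {y, z}) :
    ∃ B₀ B₁ : Set ((ℕ → ℕ) × (ℕ → ℕ)),
      K = B₀ ∪ B₁ ∧ IsGδ B₀ ∧ IsGδ B₁ ∧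
      (∀ x : ℕ → ℕ, {v : ℕ → ℕ | (x, v) ∈ B₀}.Subsingleton) ∧
      (∀ x : ℕ → ℕ, {v : ℕ → ℕ | (x, v) ∈ B₁}.Subsingleton) :=
  ⟨sectionArgmin toLex K, sectionArgmin (toDual ∘ toLex) K,
    eq_sectionArgmin_union_sectionArgmin_toDual _ hsec,
    hK.isGδ_sectionArgmin isOpen_setOf_toLex_lt,
    hK.isGδ_sectionArgmin (isOpen_setOf_toLex_lt.preimage continuous_swap),
    sectionArgmin_section_subsingleton toLex.injective K,
    sectionArgmin_section_subsingleton (toDual.injective.comp toLex.injective) K⟩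
end

section
/- Let λ be a countable limit ordinal and ρ < λ an isolated ordinal (i.e., ρ = 0 or ρ is a successor). Then there exist a surjection ⋄ : [ρ,λ) → LIM((ρ,λ]), a map ℓ : [ρ,λ] → ℕ∖{0}, and a map a : LIM((ρ,λ]) × ℕ → [ρ,λ) such that: (a) for every β ∈ [ρ,λ) there exists s ≥ 1 with β < ⋄(β) < ⋄²(β) < … < ⋄^s(β) = λ; (b) for every μ ∈ LIM((ρ,λ]) the sequence k ↦ a(μ,k) is strictly increasing with supremum μ, the preimage ⋄⁻¹({μ}) equals {a(μ,k) : k ∈ ℕ}, ℓ(a(μ,k)) = ℓ(μ) + k for all k ∈ ℕ, ℓ(λ) = 1, and ℓ(ρ) = 1; (c) for every β ∈ [ρ,λ) and every ordinal γ with β < γ < ⋄(β) one has ℓ(γ) > ℓ(β) and ⋄(γ) ≤ ⋄(β); (d) for every β ∈ [ρ,λ), ℓ(β+1) = ℓ(β) + 1. -/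
/-!
Induction on the countable limit `μ`, for every `β₀ < μ` and every value `n` of `ℓ μ` at once.
Choose a ladder `β₀ = c 0 < c 1 < ⋯` cofinal in `μ` in which each `c (k + 1)` is `c k + 1` or a
limit. Put `⋄ (c k) = μ`, `ℓ (c k) = n + k`, `a (μ, ·) = c`, and fill each gap
`[c k + 1, c (k + 1)]` with the structure given by induction for the limit `c (k + 1)` with
`ℓ (c (k + 1)) = n + k + 1`. Keeping `a (μ, 0) = β₀` in the induction gives
`ℓ (c k + 1) = n + k + 1`, which is (d) at the seams.
-/

open Order Set Cardinal Ordinal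

theorem Function.iterate_eq_of_forall_lt {α : Type*} {f g : α → α} {x : α} {s : ℕ}
    (h : ∀ i < s, f (g^[i] x) = g (g^[i] x)) : f^[s] x = g^[s] x := by
  induction s with
  | zero => rfl
  | succ s ih =>
    rw [Function.iterate_succ_apply', Function.iterate_succ_apply',
      ih fun i hi => h i (by omega), h s (by omega)]

section Blocks

variable {α : Type*} [LinearOrder α] {c : ℕ → α} {x : α} {k : ℕ}

open Classical in
noncomputable def blockIdx (c : ℕ → α) (x : α) : ℕ :=
  if h : ∃ k, c k ≤ x ∧ x < c (k + 1) then h.choose else 0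

theorem blockIdx_eq (hc : StrictMono c) (h₁ : c k ≤ x) (h₂ : x < c (k + 1)) :
    blockIdx c x = k := by
  have h : ∃ k, c k ≤ x ∧ x < c (k + 1) := ⟨k, h₁, h₂⟩
  obtain ⟨hj₁, hj₂⟩ := h.choose_spec
  have := hc.lt_iff_lt.1 (h₁.trans_lt hj₂)
  have := hc.lt_iff_lt.1 (hj₁.trans_lt h₂)
  rw [blockIdx, dif_pos h]
  omega

theorem exists_block (h₀ : c 0 ≤ x) (hx : ∃ k, x < c k) : ∃ k, c k ≤ x ∧ x < c (k + 1) := by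
  classical
  obtain ⟨k, hk⟩ : ∃ k, Nat.find hx = k + 1 :=
    Nat.exists_eq_succ_of_ne_zero fun h => (Nat.find_spec hx).not_ge (h ▸ h₀)
  exact ⟨k, not_lt.1 (Nat.find_min hx (by omega)), hk ▸ Nat.find_spec hx⟩

end Blocks

structure IsDiamondSystem (β₀ μ : Ordinal) (n : ℕ) (d : Ordinal → Ordinal) (l : Ordinal → ℕ)
    (a : Ordinal → ℕ → Ordinal) : Prop where
  isSuccLimit_d : ∀ β ∈ Ico β₀ μ, IsSuccLimit (d β)
  lt_d : ∀ β ∈ Ico β₀ μ, β < d β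
  d_le : ∀ β ∈ Ico β₀ μ, d β ≤ μ
  exists_iterate_d_eq : ∀ β ∈ Ico β₀ μ, ∃ s, d^[s] β = μ
  le_l : ∀ β ∈ Icc β₀ μ, n ≤ l β
  l_top : l μ = n
  a_top_zero : a μ 0 = β₀
  le_a : ∀ ν ∈ Ioc β₀ μ, IsSuccLimit ν → ∀ k, β₀ ≤ a ν k
  strictMono_a : ∀ ν ∈ Ioc β₀ μ, IsSuccLimit ν → StrictMono (a ν)
  a_lt : ∀ ν ∈ Ioc β₀ μ, IsSuccLimit ν → ∀ k, a ν k < ν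
  exists_lt_a : ∀ ν ∈ Ioc β₀ μ, IsSuccLimit ν → ∀ γ < ν, ∃ k, γ < a ν k
  d_eq_iff : ∀ ν ∈ Ioc β₀ μ, IsSuccLimit ν → ∀ β ∈ Ico β₀ μ, d β = ν ↔ ∃ k, β = a ν k
  l_a : ∀ ν ∈ Ioc β₀ μ, IsSuccLimit ν → ∀ k, l (a ν k) = l ν + k
  lt_l : ∀ β ∈ Ico β₀ μ, ∀ γ ∈ Ioo β (d β), l β < l γ
  d_le_d : ∀ β ∈ Ico β₀ μ, ∀ γ ∈ Ioo β (d β), d γ ≤ d β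
  l_add_one : ∀ β ∈ Ico β₀ μ, l (β + 1) = l β + 1

namespace IsDiamondSystem

variable {β₀ μ β ν : Ordinal} {n : ℕ} {d : Ordinal → Ordinal} {l : Ordinal → ℕ}
  {a : Ordinal → ℕ → Ordinal}

theorem l_bot (h : IsDiamondSystem β₀ μ n d l a) (hμ : IsSuccLimit μ) (hβ₀ : β₀ < μ) :
    l β₀ = n := by
  simpa [h.a_top_zero, h.l_top] using h.l_a μ ⟨hβ₀, le_rfl⟩ hμ 0

theorem exists_d_eq (h : IsDiamondSystem β₀ μ n d l a) (hν : ν ∈ Ioc β₀ μ)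
    (hνl : IsSuccLimit ν) : ∃ β ∈ Ico β₀ μ, d β = ν := by
  have ha : a ν 0 ∈ Ico β₀ μ := ⟨h.le_a ν hν hνl 0, (h.a_lt ν hν hνl 0).trans_le hν.2⟩
  exact ⟨a ν 0, ha, (h.d_eq_iff ν hν hνl _ ha).2 ⟨0, rfl⟩⟩

theorem exists_iterate (h : IsDiamondSystem β₀ μ n d l a) (hβ : β ∈ Ico β₀ μ) :
    ∃ s, d^[s] β = μ ∧ ∀ i < s, d^[i] β ∈ Ico β₀ μ := by
  classical
  have hex := h.exists_iterate_d_eq β hβ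
  refine ⟨Nat.find hex, Nat.find_spec hex, fun i hi => ?_⟩
  induction i with
  | zero => exact hβ
  | succ i ih =>
    have hi' := ih (by omega)
    have hne := Nat.find_min hex hi
    rw [Function.iterate_succ_apply'] at hne ⊢
    exact ⟨hi'.1.trans (h.lt_d _ hi').le, (h.d_le _ hi').lt_of_ne hne⟩

theorem exists_iterate_strictMono (h : IsDiamondSystem β₀ μ n d l a) (hβ : β ∈ Ico β₀ μ) :
    ∃ s, 1 ≤ s ∧ (∀ i < s, d^[i] β < d^[i + 1] β) ∧ d^[s] β = μ := by
  obtain ⟨s, hs, hmem⟩ := h.exists_iterate hβ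
  refine ⟨s, Nat.one_le_iff_ne_zero.2 ?_, fun i hi => ?_, hs⟩
  · rintro rfl
    exact hβ.2.ne hs
  · rw [Function.iterate_succ_apply']
    exact h.lt_d _ (hmem i hi)

end IsDiamondSystem

structure IsOrdinalLadder (β₀ μ : Ordinal) (c : ℕ → Ordinal) : Prop where
  apply_zero : c 0 = β₀
  strictMono : StrictMono c
  apply_lt : ∀ k, c k < μ
  exists_lt_apply : ∀ β < μ, ∃ k, β < c k
  succ_or_isSuccLimit : ∀ k, c (k + 1) = c k + 1 ∨ IsSuccLimit (c (k + 1))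

theorem IsOrdinalLadder.isSuccLimit {β₀ μ : Ordinal} {c : ℕ → Ordinal}
    (hc : IsOrdinalLadder β₀ μ c) : IsSuccLimit μ := by
  refine Ordinal.isSuccLimit_iff.2 ⟨(pos_of_gt (hc.apply_lt 0)).ne', ?_⟩
  refine isSuccPrelimit_iff_succ_lt.2 fun β hβ => ?_
  obtain ⟨k, hk⟩ := hc.exists_lt_apply β hβ
  exact (succ_le_of_lt hk).trans_lt (hc.apply_lt k)

/-- `ω * (x / ω)` is `x` with its finite part removed: each step is a successor step or lands on
a limit, and finitely many steps after reading `x k` the sequence has passed `x k`. -/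
noncomputable def ladderSeq (β₀ : Ordinal) (x : ℕ → Ordinal) : ℕ → Ordinal
  | 0 => β₀
  | k + 1 => max (ladderSeq β₀ x k + 1) (ω * (x k / ω))

namespace ladderSeq

variable {β₀ μ : Ordinal} {x : ℕ → Ordinal}

theorem succ_or_isSuccLimit (k : ℕ) :
    ladderSeq β₀ x (k + 1) = ladderSeq β₀ x k + 1 ∨ IsSuccLimit (ladderSeq β₀ x (k + 1)) := by
  rcases le_or_gt (ω * (x k / ω)) (ladderSeq β₀ x k + 1) with h | h
  · exact .inl (max_eq_left h)
  · refine .inr ?_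
    rw [ladderSeq, max_eq_right h.le]
    refine Ordinal.isSuccLimit_mul_left Ordinal.isSuccLimit_omega0 (pos_iff_ne_zero.2 ?_)
    rintro h0
    simp [h0] at h

theorem strictMono : StrictMono (ladderSeq β₀ x) :=
  strictMono_nat_of_lt_succ fun _ => (lt_add_one _).trans_le (le_max_left _ _)

theorem add_le_apply_add (j m : ℕ) : ladderSeq β₀ x j + m ≤ ladderSeq β₀ x (j + m) := by
  induction m with
  | zero => simp
  | succ m ih =>
    rw [Nat.cast_succ, ← add_assoc, ← add_assoc]
    exact (add_le_add_left ih 1).trans (le_max_left _ _)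

theorem apply_lt (hμ : IsSuccLimit μ) (hβ₀ : β₀ < μ) (hx : ∀ k, x k < μ) (k : ℕ) :
    ladderSeq β₀ x k < μ := by
  induction k with
  | zero => exact hβ₀
  | succ k ih => exact max_lt (hμ.add_one_lt ih) ((Ordinal.mul_div_le _ _).trans_lt (hx k))

theorem exists_lt_apply (hx : ∀ β < μ, ∃ k, x k = β) : ∀ β < μ, ∃ k, β < ladderSeq β₀ x k := by
  intro β hβ
  obtain ⟨j, rfl⟩ := hx β hβ
  obtain ⟨m, hm⟩ := Ordinal.lt_omega0.1 (Ordinal.mod_lt (x j) Ordinal.omega0_ne_zero)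
  refine ⟨j + 1 + m + 1, ?_⟩
  calc x j = ω * (x j / ω) + m := by rw [← hm, Ordinal.div_add_mod]
    _ ≤ ladderSeq β₀ x (j + 1) + m := add_le_add_left (le_max_right _ _) _
    _ ≤ ladderSeq β₀ x (j + 1 + m) := add_le_apply_add _ _
    _ < ladderSeq β₀ x (j + 1 + m + 1) := strictMono (Nat.lt_succ_self _)

end ladderSeq

theorem exists_isOrdinalLadder {β₀ μ : Ordinal} (hμ : IsSuccLimit μ) (hμ₁ : μ < ω₁)
    (hβ₀ : β₀ < μ) : ∃ c, IsOrdinalLadder β₀ μ c := by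
  have : Countable (Iio μ) := by
    rw [← mk_le_aleph0_iff, Cardinal.mk_Iio_ordinal, lift_le_aleph0]
    simpa [← ord_aleph, lt_ord] using hμ₁
  have : Nonempty (Iio μ) := ⟨⟨β₀, hβ₀⟩⟩
  obtain ⟨f, hf⟩ := exists_surjective_nat (Iio μ)
  have hx : ∀ k, (f k : Ordinal) < μ := fun k => (f k).2
  exact ⟨ladderSeq β₀ (fun k => f k), rfl, ladderSeq.strictMono, ladderSeq.apply_lt hμ hβ₀ hx,
    ladderSeq.exists_lt_apply fun β hβ => (hf ⟨β, hβ⟩).imp fun _ hk => congrArg Subtype.val hk,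
    ladderSeq.succ_or_isSuccLimit⟩

structure DiamondGluing (β₀ μ : Ordinal) (n : ℕ) where
  c : ℕ → Ordinal
  D : ℕ → Ordinal → Ordinal
  L : ℕ → Ordinal → ℕ
  A : ℕ → Ordinal → ℕ → Ordinal
  ladder : IsOrdinalLadder β₀ μ c
  block : ∀ k, IsSuccLimit (c (k + 1)) →
    IsDiamondSystem (c k + 1) (c (k + 1)) (n + (k + 1)) (D k) (L k) (A k)

namespace DiamondGluing

variable {β₀ μ β γ ν : Ordinal} {n : ℕ} {k : ℕ} (G : DiamondGluing β₀ μ n)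

noncomputable def d (β : Ordinal) : Ordinal :=
  if β = G.c (blockIdx G.c β) then μ else G.D (blockIdx G.c β) β

noncomputable def l (β : Ordinal) : ℕ :=
  if β = μ then n else if β = G.c (blockIdx G.c β) then n + blockIdx G.c β
  else G.L (blockIdx G.c β) β

/-- The blocks of `fun k ↦ c k + 1` are the intervals `(c k, c (k + 1)]`. -/
noncomputable def a (ν : Ordinal) : ℕ → Ordinal :=
  if ν = μ then G.c else G.A (blockIdx (fun k => G.c k + 1) ν) ν

theorem blockIdx_c (k : ℕ) : blockIdx G.c (G.c k) = k :=
  blockIdx_eq G.ladder.strictMono le_rfl (G.ladder.strictMono k.lt_succ_self)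

theorem le_c (k : ℕ) : β₀ ≤ G.c k :=
  G.ladder.apply_zero.symm.trans_le (G.ladder.strictMono.monotone (Nat.zero_le k))

theorem c_lt_of_mem_block (h : β ∈ Ico (G.c k + 1) (G.c (k + 1))) : G.c k < β :=
  Order.add_one_le_iff.1 h.1

theorem blockIdx_of_mem_block (h : β ∈ Ico (G.c k + 1) (G.c (k + 1))) : blockIdx G.c β = k :=
  blockIdx_eq G.ladder.strictMono (G.c_lt_of_mem_block h).le h.2

theorem ne_c_of_mem_block (h : β ∈ Ico (G.c k + 1) (G.c (k + 1))) (j : ℕ) : β ≠ G.c j := by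
  rintro rfl
  have := G.ladder.strictMono.lt_iff_lt.1 (G.c_lt_of_mem_block h)
  have := G.ladder.strictMono.lt_iff_lt.1 h.2
  omega

theorem isSuccLimit_of_mem_block (h : β ∈ Ico (G.c k + 1) (G.c (k + 1))) :
    IsSuccLimit (G.c (k + 1)) :=
  (G.ladder.succ_or_isSuccLimit k).resolve_left fun he => (he ▸ h.2).not_ge h.1

theorem eq_c_or_mem_block (h : β ∈ Ico β₀ μ) :
    (∃ k, β = G.c k) ∨ ∃ k, β ∈ Ico (G.c k + 1) (G.c (k + 1)) := by
  obtain ⟨k, hk₁, hk₂⟩ :=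
    exists_block (G.ladder.apply_zero.trans_le h.1) (G.ladder.exists_lt_apply β h.2)
  rcases hk₁.eq_or_lt with rfl | hlt
  · exact .inl ⟨k, rfl⟩
  · exact .inr ⟨k, Order.add_one_le_of_lt hlt, hk₂⟩

theorem eq_of_mem_Ioc_c {j : ℕ} (hj : ν ∈ Ioc (G.c j) (G.c (j + 1)))
    (hk : ν ∈ Ioc (G.c k) (G.c (k + 1))) : j = k := by
  have := G.ladder.strictMono.lt_iff_lt.1 (hj.1.trans_le hk.2)
  have := G.ladder.strictMono.lt_iff_lt.1 (hk.1.trans_le hj.2)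
  omega

theorem d_c (k : ℕ) : G.d (G.c k) = μ := by
  rw [d, G.blockIdx_c, if_pos rfl]

theorem d_of_mem_block (h : β ∈ Ico (G.c k + 1) (G.c (k + 1))) : G.d β = G.D k β := by
  rw [d, G.blockIdx_of_mem_block h, if_neg (G.ne_c_of_mem_block h k)]

theorem d_mem_Ioc_of_mem_block (h : β ∈ Ico (G.c k + 1) (G.c (k + 1))) :
    G.d β ∈ Ioc β (G.c (k + 1)) := by
  have hB := G.block k (G.isSuccLimit_of_mem_block h)
  rw [G.d_of_mem_block h]
  exact ⟨hB.lt_d β h, hB.d_le β h⟩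

theorem l_top : G.l μ = n := if_pos rfl

theorem l_c (k : ℕ) : G.l (G.c k) = n + k := by
  rw [l, if_neg (G.ladder.apply_lt k).ne, G.blockIdx_c, if_pos rfl]

theorem l_of_mem_block (hk : IsSuccLimit (G.c (k + 1))) (h : β ∈ Icc (G.c k + 1) (G.c (k + 1))) :
    G.l β = G.L k β := by
  rcases h.2.eq_or_lt with rfl | hlt
  · rw [G.l_c, (G.block k hk).l_top]
  · have hβ : β ∈ Ico (G.c k + 1) (G.c (k + 1)) := ⟨h.1, hlt⟩
    rw [l, if_neg (hlt.trans (G.ladder.apply_lt _)).ne, G.blockIdx_of_mem_block hβ,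
      if_neg (G.ne_c_of_mem_block hβ k)]

theorem a_top : G.a μ = G.c := if_pos rfl

theorem exists_block_of_isSuccLimit (hνl : IsSuccLimit ν) (hν : ν ∈ Ioo β₀ μ) :
    ∃ k, IsSuccLimit (G.c (k + 1)) ∧ ν ∈ Ioc (G.c k + 1) (G.c (k + 1)) ∧ G.a ν = G.A k ν := by
  have hc : StrictMono fun k => G.c k + 1 := fun i j hij =>
    Order.lt_add_one_iff.2 (Order.add_one_le_of_lt (G.ladder.strictMono hij))
  obtain ⟨k, hk₁, hk₂⟩ := exists_block (c := fun k => G.c k + 1)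
    (Order.add_one_le_of_lt (G.ladder.apply_zero.trans_lt hν.1))
    ((G.ladder.exists_lt_apply ν hν.2).imp fun _ h => h.trans (lt_add_one _))
  have hlt : G.c k < ν := Order.add_one_le_iff.1 hk₁
  have hle : ν ≤ G.c (k + 1) := Order.lt_add_one_iff.1 hk₂
  refine ⟨k, ?_, ⟨hνl.add_one_lt hlt, hle⟩, ?_⟩
  · rcases hle.eq_or_lt with rfl | hlt'
    · exact hνl
    · exact G.isSuccLimit_of_mem_block ⟨hk₁, hlt'⟩
  · rw [a, if_neg hν.2.ne, blockIdx_eq hc hk₁ hk₂]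

theorem isSuccLimit_d (h : β ∈ Ico β₀ μ) : IsSuccLimit (G.d β) := by
  rcases G.eq_c_or_mem_block h with ⟨k, rfl⟩ | ⟨k, hk⟩
  · rw [G.d_c]
    exact G.ladder.isSuccLimit
  · rw [G.d_of_mem_block hk]
    exact (G.block k (G.isSuccLimit_of_mem_block hk)).isSuccLimit_d β hk

theorem lt_d_and_d_le (h : β ∈ Ico β₀ μ) : β < G.d β ∧ G.d β ≤ μ := by
  rcases G.eq_c_or_mem_block h with ⟨k, rfl⟩ | ⟨k, hk⟩
  · rw [G.d_c]
    exact ⟨h.2, le_rfl⟩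
  · have hd := G.d_mem_Ioc_of_mem_block hk
    exact ⟨hd.1, hd.2.trans (G.ladder.apply_lt _).le⟩

theorem exists_iterate_d_eq (h : β ∈ Ico β₀ μ) : ∃ s, G.d^[s] β = μ := by
  rcases G.eq_c_or_mem_block h with ⟨k, rfl⟩ | ⟨k, hk⟩
  · exact ⟨1, G.d_c k⟩
  · obtain ⟨s, hs, hmem⟩ := (G.block k (G.isSuccLimit_of_mem_block hk)).exists_iterate hk
    refine ⟨s + 1, ?_⟩
    rw [Function.iterate_succ_apply',
      Function.iterate_eq_of_forall_lt fun i hi => G.d_of_mem_block (hmem i hi), hs, G.d_c]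

theorem add_lt_l (hγ : γ ∈ Ioo (G.c k) μ) : n + k < G.l γ := by
  rcases G.eq_c_or_mem_block ⟨(G.le_c k).trans hγ.1.le, hγ.2⟩ with ⟨j, rfl⟩ | ⟨j, hj⟩
  · rw [G.l_c]
    have := G.ladder.strictMono.lt_iff_lt.1 hγ.1
    omega
  · have hlim := G.isSuccLimit_of_mem_block hj
    have := G.ladder.strictMono.lt_iff_lt.1 (hγ.1.trans hj.2)
    have := (G.block j hlim).le_l γ (Ico_subset_Icc_self hj)
    rw [G.l_of_mem_block hlim (Ico_subset_Icc_self hj)]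
    omega

theorem le_l (h : β ∈ Icc β₀ μ) : n ≤ G.l β := by
  rcases h.2.eq_or_lt with rfl | hlt
  · rw [G.l_top]
  rcases G.eq_c_or_mem_block ⟨h.1, hlt⟩ with ⟨k, rfl⟩ | ⟨k, hk⟩
  · rw [G.l_c]
    omega
  · exact (Nat.le_add_right n k).trans (G.add_lt_l ⟨G.c_lt_of_mem_block hk, hlt⟩).le

theorem le_a (hν : ν ∈ Ioc β₀ μ) (hνl : IsSuccLimit ν) (m : ℕ) : β₀ ≤ G.a ν m := by
  rcases hν.2.eq_or_lt with rfl | hlt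
  · rw [G.a_top]
    exact G.le_c m
  · obtain ⟨k, hk, hνk, ha⟩ := G.exists_block_of_isSuccLimit hνl ⟨hν.1, hlt⟩
    rw [ha]
    exact (G.le_c k).trans ((lt_add_one _).le.trans
      ((G.block k hk).le_a ν hνk hνl m))

theorem strictMono_a (hν : ν ∈ Ioc β₀ μ) (hνl : IsSuccLimit ν) : StrictMono (G.a ν) := by
  rcases hν.2.eq_or_lt with rfl | hlt
  · rw [G.a_top]
    exact G.ladder.strictMono
  · obtain ⟨k, hk, hνk, ha⟩ := G.exists_block_of_isSuccLimit hνl ⟨hν.1, hlt⟩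
    rw [ha]
    exact (G.block k hk).strictMono_a ν hνk hνl

theorem a_lt (hν : ν ∈ Ioc β₀ μ) (hνl : IsSuccLimit ν) (m : ℕ) : G.a ν m < ν := by
  rcases hν.2.eq_or_lt with rfl | hlt
  · rw [G.a_top]
    exact G.ladder.apply_lt m
  · obtain ⟨k, hk, hνk, ha⟩ := G.exists_block_of_isSuccLimit hνl ⟨hν.1, hlt⟩
    rw [ha]
    exact (G.block k hk).a_lt ν hνk hνl m

theorem exists_lt_a (hν : ν ∈ Ioc β₀ μ) (hνl : IsSuccLimit ν) (γ : Ordinal) (hγ : γ < ν) :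
    ∃ m, γ < G.a ν m := by
  rcases hν.2.eq_or_lt with rfl | hlt
  · rw [G.a_top]
    exact G.ladder.exists_lt_apply γ hγ
  · obtain ⟨k, hk, hνk, ha⟩ := G.exists_block_of_isSuccLimit hνl ⟨hν.1, hlt⟩
    rw [ha]
    exact (G.block k hk).exists_lt_a ν hνk hνl γ hγ

theorem l_a (hν : ν ∈ Ioc β₀ μ) (hνl : IsSuccLimit ν) (m : ℕ) :
    G.l (G.a ν m) = G.l ν + m := by
  rcases hν.2.eq_or_lt with rfl | hlt
  · rw [G.a_top, G.l_c, G.l_top]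
  · obtain ⟨k, hk, hνk, ha⟩ := G.exists_block_of_isSuccLimit hνl ⟨hν.1, hlt⟩
    have hB := G.block k hk
    have ham : G.A k ν m ∈ Icc (G.c k + 1) (G.c (k + 1)) :=
      ⟨hB.le_a ν hνk hνl m, ((hB.a_lt ν hνk hνl m).trans_le hνk.2).le⟩
    rw [ha, G.l_of_mem_block hk ham, G.l_of_mem_block hk (Ioc_subset_Icc_self hνk)]
    exact hB.l_a ν hνk hνl m

theorem d_eq_top_iff (h : β ∈ Ico β₀ μ) : G.d β = μ ↔ ∃ m, β = G.c m := by
  refine ⟨fun hd => ?_, fun ⟨m, hm⟩ => hm ▸ G.d_c m⟩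
  rcases G.eq_c_or_mem_block h with hc | ⟨k, hk⟩
  · exact hc
  · exact absurd hd ((G.d_mem_Ioc_of_mem_block hk).2.trans_lt (G.ladder.apply_lt _)).ne

theorem d_eq_iff (hν : ν ∈ Ioc β₀ μ) (hνl : IsSuccLimit ν) (h : β ∈ Ico β₀ μ) :
    G.d β = ν ↔ ∃ m, β = G.a ν m := by
  rcases hν.2.eq_or_lt with rfl | hlt
  · rw [G.a_top]
    exact G.d_eq_top_iff h
  obtain ⟨k, hk, hνk, ha⟩ := G.exists_block_of_isSuccLimit hνl ⟨hν.1, hlt⟩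
  have hB := G.block k hk
  suffices hβk : (G.d β = ν ∨ ∃ m, β = G.a ν m) → β ∈ Ico (G.c k + 1) (G.c (k + 1)) by
    rw [ha] at hβk ⊢
    have := hB.d_eq_iff ν hνk hνl β
    exact ⟨fun hd => by rwa [← this (hβk (.inl hd)), ← G.d_of_mem_block (hβk (.inl hd))],
      fun hm => by rw [G.d_of_mem_block (hβk (.inr hm))]; exact (this (hβk (.inr hm))).2 hm⟩
  rintro (hd | ⟨m, rfl⟩)
  · rcases G.eq_c_or_mem_block h with ⟨j, rfl⟩ | ⟨j, hj⟩
    · exact absurd ((G.d_c j).symm.trans hd) hlt.ne'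
    · have hdj := G.d_mem_Ioc_of_mem_block hj
      rw [hd] at hdj
      have hjk := G.eq_of_mem_Ioc_c ⟨(G.c_lt_of_mem_block hj).trans hdj.1, hdj.2⟩
        ⟨(lt_add_one _).trans hνk.1, hνk.2⟩
      exact hjk ▸ hj
  · rw [ha]
    exact ⟨hB.le_a ν hνk hνl m, (hB.a_lt ν hνk hνl m).trans_le hνk.2⟩

theorem lt_l (h : β ∈ Ico β₀ μ) (hγ : γ ∈ Ioo β (G.d β)) : G.l β < G.l γ := by
  rcases G.eq_c_or_mem_block h with ⟨k, rfl⟩ | ⟨k, hk⟩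
  · rw [G.l_c]
    exact G.add_lt_l ⟨hγ.1, G.d_c k ▸ hγ.2⟩
  · have hlim := G.isSuccLimit_of_mem_block hk
    have hγk : γ ∈ Ico (G.c k + 1) (G.c (k + 1)) :=
      ⟨hk.1.trans hγ.1.le, hγ.2.trans_le (G.d_mem_Ioc_of_mem_block hk).2⟩
    rw [G.l_of_mem_block hlim (Ico_subset_Icc_self hk),
      G.l_of_mem_block hlim (Ico_subset_Icc_self hγk)]
    exact (G.block k hlim).lt_l β hk γ ⟨hγ.1, G.d_of_mem_block hk ▸ hγ.2⟩

theorem d_le_d (h : β ∈ Ico β₀ μ) (hγ : γ ∈ Ioo β (G.d β)) : G.d γ ≤ G.d β := by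
  rcases G.eq_c_or_mem_block h with ⟨k, rfl⟩ | ⟨k, hk⟩
  · rw [G.d_c]
    exact (G.lt_d_and_d_le ⟨h.1.trans hγ.1.le, G.d_c k ▸ hγ.2⟩).2
  · have hlim := G.isSuccLimit_of_mem_block hk
    have hγk : γ ∈ Ico (G.c k + 1) (G.c (k + 1)) :=
      ⟨hk.1.trans hγ.1.le, hγ.2.trans_le (G.d_mem_Ioc_of_mem_block hk).2⟩
    rw [G.d_of_mem_block hk, G.d_of_mem_block hγk]
    exact (G.block k hlim).d_le_d β hk γ ⟨hγ.1, G.d_of_mem_block hk ▸ hγ.2⟩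

theorem l_add_one (h : β ∈ Ico β₀ μ) : G.l (β + 1) = G.l β + 1 := by
  rcases G.eq_c_or_mem_block h with ⟨k, rfl⟩ | ⟨k, hk⟩
  · rcases G.ladder.succ_or_isSuccLimit k with hs | hlim
    · rw [← hs, G.l_c, G.l_c]
      rfl
    · have hlt : G.c k + 1 < G.c (k + 1) :=
        hlim.add_one_lt (G.ladder.strictMono k.lt_succ_self)
      rw [G.l_of_mem_block hlim ⟨le_rfl, hlt.le⟩,
        (G.block k hlim).l_bot hlim hlt, G.l_c]
      rfl
  · have hlim := G.isSuccLimit_of_mem_block hk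
    rw [G.l_of_mem_block hlim ⟨hk.1.trans (lt_add_one _).le,
        Order.add_one_le_of_lt hk.2⟩, G.l_of_mem_block hlim (Ico_subset_Icc_self hk)]
    exact (G.block k hlim).l_add_one β hk

theorem isDiamondSystem : IsDiamondSystem β₀ μ n G.d G.l G.a where
  isSuccLimit_d _ := G.isSuccLimit_d
  lt_d _ h := (G.lt_d_and_d_le h).1
  d_le _ h := (G.lt_d_and_d_le h).2
  exists_iterate_d_eq _ := G.exists_iterate_d_eq
  le_l _ := G.le_l
  l_top := G.l_top
  a_top_zero := by rw [G.a_top, G.ladder.apply_zero]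
  le_a _ := G.le_a
  strictMono_a _ := G.strictMono_a
  a_lt _ := G.a_lt
  exists_lt_a _ := G.exists_lt_a
  d_eq_iff _ hν hνl _ := G.d_eq_iff hν hνl
  l_a _ := G.l_a
  lt_l _ h _ := G.lt_l h
  d_le_d _ h _ := G.d_le_d h
  l_add_one _ := G.l_add_one

end DiamondGluing

theorem exists_isDiamondSystem {μ : Ordinal} (hμ : IsSuccLimit μ) (hμ₁ : μ < ω₁) {β₀ : Ordinal}
    (hβ₀ : β₀ < μ) (n : ℕ) : ∃ d l a, IsDiamondSystem β₀ μ n d l a := by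
  induction μ using WellFoundedLT.induction generalizing β₀ n with
  | _ μ ih =>
    obtain ⟨c, hc⟩ := exists_isOrdinalLadder hμ hμ₁ hβ₀
    have hblock : ∀ k, ∃ D L A, IsSuccLimit (c (k + 1)) →
        IsDiamondSystem (c k + 1) (c (k + 1)) (n + (k + 1)) D L A := by
      intro k
      by_cases hk : IsSuccLimit (c (k + 1))
      · obtain ⟨D, L, A, h⟩ := ih _ (hc.apply_lt _) hk ((hc.apply_lt _).trans hμ₁)
          (hk.add_one_lt (hc.strictMono k.lt_succ_self)) (n + (k + 1))
        exact ⟨D, L, A, fun _ => h⟩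
      · exact ⟨id, fun _ => 0, fun _ _ => 0, fun h => absurd h hk⟩
    choose D L A hDLA using hblock
    let G : DiamondGluing β₀ μ n := ⟨c, D, L, A, hc, hDLA⟩
    exact ⟨G.d, G.l, G.a, G.isDiamondSystem⟩

theorem diamond_structure_on_ordinal_interval_general
    (lam rho : Ordinal)
    (hlam_lim : Order.IsSuccLimit lam) (hlam_ctble : lam < (Cardinal.aleph 1).ord)
    (hrho_lt : rho < lam) :
    ∃ (d : Ordinal → Ordinal) (l : Ordinal → ℕ) (a : Ordinal → ℕ → Ordinal),
      -- d maps [ρ,λ) into LIM((ρ,λ])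
      (∀ β : Ordinal, rho ≤ β → β < lam → (Order.IsSuccLimit (d β) ∧ rho < d β ∧ d β ≤ lam)) ∧
      -- d is a surjection onto LIM((ρ,λ])
      (∀ μ : Ordinal, Order.IsSuccLimit μ → rho < μ → μ ≤ lam →
        ∃ β : Ordinal, rho ≤ β ∧ β < lam ∧ d β = μ) ∧
      -- l maps [ρ,λ] into ℕ ∖ {0}
      (∀ β : Ordinal, rho ≤ β → β ≤ lam → 1 ≤ l β) ∧
      -- a maps LIM((ρ,λ]) × ℕ into [ρ,λ)
      (∀ μ : Ordinal, Order.IsSuccLimit μ → rho < μ → μ ≤ lam →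
        ∀ k : ℕ, rho ≤ a μ k ∧ a μ k < lam) ∧
      -- (a): iterating d from any β ∈ [ρ,λ) strictly increases and reaches λ
      (∀ β : Ordinal, rho ≤ β → β < lam →
        ∃ s : ℕ, 1 ≤ s ∧ (∀ i : ℕ, i < s → d^[i] β < d^[i + 1] β) ∧ d^[s] β = lam) ∧
      -- (b)
      (∀ μ : Ordinal, Order.IsSuccLimit μ → rho < μ → μ ≤ lam →
        StrictMono (a μ) ∧ (∀ k : ℕ, a μ k < μ) ∧ (∀ γ : Ordinal, γ < μ → ∃ k : ℕ, γ < a μ k) ∧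
        (∀ β : Ordinal, rho ≤ β → β < lam → (d β = μ ↔ ∃ k : ℕ, β = a μ k)) ∧
        (∀ k : ℕ, l (a μ k) = l μ + k)) ∧
      l lam = 1 ∧ l rho = 1 ∧
      -- (c)
      (∀ β γ : Ordinal, rho ≤ β → β < lam → β < γ → γ < d β → l β < l γ ∧ d γ ≤ d β) ∧
      -- (d)
      (∀ β : Ordinal, rho ≤ β → β < lam → l (β + 1) = l β + 1) := by
  obtain ⟨d, l, a, h⟩ :=
    exists_isDiamondSystem hlam_lim (by rwa [ord_aleph] at hlam_ctble) hrho_lt 1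
  refine ⟨d, l, a, fun β h₁ h₂ => ?_, fun μ hμ h₁ h₂ => ?_, fun β h₁ h₂ => h.le_l β ⟨h₁, h₂⟩,
    fun μ hμ h₁ h₂ k => ?_, fun β h₁ h₂ => h.exists_iterate_strictMono ⟨h₁, h₂⟩,
    fun μ hμ h₁ h₂ => ?_, h.l_top, h.l_bot hlam_lim hrho_lt,
    fun β γ h₁ h₂ hβγ hγ => ⟨h.lt_l β ⟨h₁, h₂⟩ γ ⟨hβγ, hγ⟩, h.d_le_d β ⟨h₁, h₂⟩ γ ⟨hβγ, hγ⟩⟩,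
    fun β h₁ h₂ => h.l_add_one β ⟨h₁, h₂⟩⟩
  · exact ⟨h.isSuccLimit_d β ⟨h₁, h₂⟩, h₁.trans_lt (h.lt_d β ⟨h₁, h₂⟩), h.d_le β ⟨h₁, h₂⟩⟩
  · obtain ⟨β, hβ, hdβ⟩ := h.exists_d_eq ⟨h₁, h₂⟩ hμ
    exact ⟨β, hβ.1, hβ.2, hdβ⟩
  · exact ⟨h.le_a μ ⟨h₁, h₂⟩ hμ k, (h.a_lt μ ⟨h₁, h₂⟩ hμ k).trans_le h₂⟩
  · exact ⟨h.strictMono_a μ ⟨h₁, h₂⟩ hμ, h.a_lt μ ⟨h₁, h₂⟩ hμ, h.exists_lt_a μ ⟨h₁, h₂⟩ hμ,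
      fun β hβ₁ hβ₂ => h.d_eq_iff μ ⟨h₁, h₂⟩ hμ β ⟨hβ₁, hβ₂⟩, h.l_a μ ⟨h₁, h₂⟩ hμ⟩

/-- Auxiliary structure of the ordinal interval `[ρ, λ]` (Lemma on `⋄`, `ℓ`, `a`):
for a countable limit ordinal `λ` and an isolated ordinal `ρ < λ` there are a surjection
`d : [ρ,λ) → LIM((ρ,λ])`, a map `l : [ρ,λ] → ℕ∖{0}` and a map
`a : LIM((ρ,λ]) × ℕ → [ρ,λ)` satisfying (a)–(d). -/
theorem diamond_structure_on_ordinal_interval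
    (lam rho : Ordinal)
    (hlam_lim : Order.IsSuccLimit lam) (hlam_ctble : lam < (Cardinal.aleph 1).ord)
    (hrho_lt : rho < lam) (hrho_isol : rho = 0 ∨ ∃ γ : Ordinal, rho = γ + 1) :
    ∃ (d : Ordinal → Ordinal) (l : Ordinal → ℕ) (a : Ordinal → ℕ → Ordinal),
      -- d maps [ρ,λ) into LIM((ρ,λ])
      (∀ β : Ordinal, rho ≤ β → β < lam → (Order.IsSuccLimit (d β) ∧ rho < d β ∧ d β ≤ lam)) ∧
      -- d is a surjection onto LIM((ρ,λ])
      (∀ μ : Ordinal, Order.IsSuccLimit μ → rho < μ → μ ≤ lam →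
        ∃ β : Ordinal, rho ≤ β ∧ β < lam ∧ d β = μ) ∧
      -- l maps [ρ,λ] into ℕ ∖ {0}
      (∀ β : Ordinal, rho ≤ β → β ≤ lam → 1 ≤ l β) ∧
      -- a maps LIM((ρ,λ]) × ℕ into [ρ,λ)
      (∀ μ : Ordinal, Order.IsSuccLimit μ → rho < μ → μ ≤ lam →
        ∀ k : ℕ, rho ≤ a μ k ∧ a μ k < lam) ∧
      -- (a): iterating d from any β ∈ [ρ,λ) strictly increases and reaches λ
      (∀ β : Ordinal, rho ≤ β → β < lam →
        ∃ s : ℕ, 1 ≤ s ∧ (∀ i : ℕ, i < s → d^[i] β < d^[i + 1] β) ∧ d^[s] β = lam) ∧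
      -- (b)
      (∀ μ : Ordinal, Order.IsSuccLimit μ → rho < μ → μ ≤ lam →
        StrictMono (a μ) ∧ (∀ k : ℕ, a μ k < μ) ∧ (∀ γ : Ordinal, γ < μ → ∃ k : ℕ, γ < a μ k) ∧
        (∀ β : Ordinal, rho ≤ β → β < lam → (d β = μ ↔ ∃ k : ℕ, β = a μ k)) ∧
        (∀ k : ℕ, l (a μ k) = l μ + k)) ∧
      l lam = 1 ∧ l rho = 1 ∧
      -- (c)
      (∀ β γ : Ordinal, rho ≤ β → β < lam → β < γ → γ < d β → l β < l γ ∧ d γ ≤ d β) ∧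
      -- (d)
      (∀ β : Ordinal, rho ≤ β → β < lam → l (β + 1) = l β + 1) :=
  diamond_structure_on_ordinal_interval_general lam rho hlam_lim hlam_ctble hrho_lt
end

section
/- Fix a countable limit ordinal α and functions ⋄ : [0,α) → LIM((0,α]), ℓ : [0,α] → ℕ∖{0}, a : LIM((0,α]) × ℕ → [0,α) satisfying: (a) for every β ∈ [0,α) there is s ≥ 1 with β < ⋄(β) < ⋄²(β) < … < ⋄^s(β) = α; (b) for every limit μ ∈ (0,α] the sequence k ↦ a(μ,k) is strictly increasing with supremum μ, ⋄⁻¹({μ}) = {a(μ,k) : k ∈ ℕ}, ℓ(a(μ,k)) = ℓ(μ)+k, and ℓ(α) = ℓ(0) = 1; (c) for β ∈ [0,α) and β < γ < ⋄(β) one has ℓ(γ) > ℓ(β) and ⋄(γ) ≤ ⋄(β); (d) ℓ(β+1) = ℓ(β)+1 for β ∈ [0,α). Then for every natural number L ≥ 1 there exist a unique n(L) ∈ ℕ and a unique finite sequence of ordinals β_L^0, β_L^1, …, β_L^{n(L)} such that: (i) 0 = β_L^{n(L)} < β_L^{n(L)-1} < … < β_L^0 = α; (ii) if i < n(L) and β_L^i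 is isolated, then ℓ(β_L^i) ≤ L, β_L^i = β_L^{i+1} + 1, and ℓ(β_L^{i+1}) < L; (iii) if i < n(L) and β_L^i is a limit ordinal, then ℓ(β_L^i) ≤ L and β_L^{i+1} is the unique ordinal satisfying ⋄(β_L^{i+1}) = β_L^i and ℓ(β_L^{i+1}) = L. -/
/-- The auxiliary ordinal structure `(⋄, ℓ, a)` on `[0, α]` satisfying conditions (a)–(d). -/
def AuxStruct (α : Ordinal) (d : Ordinal → Ordinal) (l : Ordinal → ℕ)
    (a : Ordinal → ℕ → Ordinal) : Prop :=
  -- d maps [0,α) into LIM((0,α])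
  (∀ β : Ordinal, β < α → (Order.IsSuccLimit (d β) ∧ 0 < d β ∧ d β ≤ α)) ∧
  -- d is a surjection onto LIM((0,α])
  (∀ μ : Ordinal, Order.IsSuccLimit μ → μ ≤ α → ∃ β : Ordinal, β < α ∧ d β = μ) ∧
  -- l maps [0,α] into ℕ ∖ {0}
  (∀ β : Ordinal, β ≤ α → 1 ≤ l β) ∧
  -- a maps LIM((0,α]) × ℕ into [0,α)
  (∀ μ : Ordinal, Order.IsSuccLimit μ → μ ≤ α → ∀ k : ℕ, a μ k < α) ∧
  -- (a)
  (∀ β : Ordinal, β < α →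
    ∃ s : ℕ, 1 ≤ s ∧ (∀ i : ℕ, i < s → d^[i] β < d^[i + 1] β) ∧ d^[s] β = α) ∧
  -- (b)
  (∀ μ : Ordinal, Order.IsSuccLimit μ → μ ≤ α →
    StrictMono (a μ) ∧ (∀ k : ℕ, a μ k < μ) ∧ (∀ γ : Ordinal, γ < μ → ∃ k : ℕ, γ < a μ k) ∧
    (∀ β : Ordinal, β < α → (d β = μ ↔ ∃ k : ℕ, β = a μ k)) ∧
    (∀ k : ℕ, l (a μ k) = l μ + k)) ∧
  l α = 1 ∧ l 0 = 1 ∧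
  -- (c)
  (∀ β γ : Ordinal, β < α → β < γ → γ < d β → l β < l γ ∧ d γ ≤ d β) ∧
  -- (d)
  (∀ β : Ordinal, β < α → l (β + 1) = l β + 1)

/-- The `⋄`-path associated to the level `L`: a finite strictly decreasing sequence
`b 0 = α > b 1 > ⋯ > b n = 0` such that each step is as prescribed by the mappings `⋄`
and `ℓ` at level `L`. -/
def IsDiamondPath (α : Ordinal) (d : Ordinal → Ordinal) (l : Ordinal → ℕ)
    (L : ℕ) (n : ℕ) (b : ℕ → Ordinal) : Prop :=
  b 0 = α ∧ b n = 0 ∧ (∀ i : ℕ, i < n → b (i + 1) < b i) ∧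
  (∀ i : ℕ, i < n →
    (¬ Order.IsSuccLimit (b i) → l (b i) ≤ L ∧ b i = b (i + 1) + 1 ∧ l (b (i + 1)) < L) ∧
    (Order.IsSuccLimit (b i) → l (b i) ≤ L ∧ d (b (i + 1)) = b i ∧ l (b (i + 1)) = L ∧
      ∀ γ : Ordinal, γ < α → d γ = b i → l γ = L → γ = b (i + 1)))

/-!
Read from `α` downwards, the path is forced: at a successor `γ + 1` the next point must be `γ`,
and at a limit `μ` it must be the unique point of the fibre `⋄⁻¹{μ} = {a(μ,k)}` of level `L`,
namely `a(μ, L - ℓ(μ))`. Both kinds of step keep the level at most `L` and strictly decrease the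
ordinal, so well-foundedness makes the path reach `0`, and determinism of the steps makes it unique.
-/

open Order

section RelPath

variable {X : Type*} {R : X → X → Prop} {P : X → Prop}

def IsRelPath (R : X → X → Prop) (n : ℕ) (b : ℕ → X) (x y : X) : Prop :=
  b 0 = x ∧ b n = y ∧ ∀ i < n, R (b i) (b (i + 1))

theorem IsRelPath.cons {n : ℕ} {b : ℕ → X} {x y z : X} (hb : IsRelPath R n b y z) (hxy : R x y) :
    IsRelPath R (n + 1) (fun | 0 => x | i + 1 => b i) x z := by
  obtain ⟨hb0, hbn, hstep⟩ := hb
  refine ⟨rfl, hbn, fun i hi => ?_⟩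
  cases i with
  | zero => show R x (b 0); exact hb0 ▸ hxy
  | succ i => exact hstep i (by omega)

theorem IsRelPath.tail {n : ℕ} {b : ℕ → X} {x z : X} (hb : IsRelPath R (n + 1) b x z) :
    IsRelPath R n (fun i => b (i + 1)) (b 1) z :=
  ⟨rfl, hb.2.1, fun i hi => hb.2.2 (i + 1) (by omega)⟩

theorem exists_isRelPath [LT X] [WellFoundedLT X] {z : X} (hlt : ∀ x y, R x y → y < x)
    (hP : ∀ x y, P x → R x y → P y) (hstep : ∀ x, P x → x ≠ z → ∃ y, R x y) :
    ∀ x, P x → ∃ n b, IsRelPath R n b x z := by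
  intro x
  induction x using WellFoundedLT.induction with
  | _ x ih =>
    intro hx
    by_cases hxz : x = z
    · exact ⟨0, fun _ => x, rfl, hxz, fun _ h => absurd h (Nat.not_lt_zero _)⟩
    · obtain ⟨y, hxy⟩ := hstep x hx hxz
      obtain ⟨n, b, hb⟩ := ih y (hlt x y hxy) (hP x y hx hxy)
      exact ⟨n + 1, _, hb.cons hxy⟩

theorem IsRelPath.unique {z : X} (hdet : ∀ x y y', P x → R x y → R x y' → y = y')
    (hP : ∀ x y, P x → R x y → P y) (hz : ∀ y, ¬ R z y) :
    ∀ {n n' : ℕ} {x : X} {b b' : ℕ → X}, P x → IsRelPath R n b x z → IsRelPath R n' b' x z →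
      n' = n ∧ ∀ i ≤ n, b' i = b i := by
  intro n
  induction n with
  | zero =>
    rintro (_ | m) x b b' - ⟨hb0, hbn, -⟩ ⟨hb0', -, hstep'⟩
    · exact ⟨rfl, fun i hi => by rw [Nat.le_zero.1 hi, hb0, hb0']⟩
    · have hxz : b' 0 = z := hb0'.trans (hb0.symm.trans hbn)
      exact absurd (hstep' 0 (by omega)) (hxz ▸ hz _)
  | succ n ih =>
    rintro (_ | m) x b b' hx hb hb'
    · have hxz : b 0 = z := hb.1.trans (hb'.1.symm.trans hb'.2.1)
      exact absurd (hb.2.2 0 (by omega)) (hxz ▸ hz _)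
    · have hxb : R x (b 1) := hb.1 ▸ hb.2.2 0 (by omega)
      have hxb' : R x (b' 1) := hb'.1 ▸ hb'.2.2 0 (by omega)
      have h1 : b' 1 = b 1 := hdet x _ _ hx hxb' hxb
      have htail' := hb'.tail
      rw [h1] at htail'
      obtain ⟨hmn, htail⟩ := ih (hP x _ hx hxb) hb.tail htail'
      refine ⟨by omega, fun i hi => ?_⟩
      cases i with
      | zero => rw [hb.1, hb'.1]
      | succ i => exact htail i (by omega)

end RelPath

section DiamondStep

variable {α : Ordinal} {d : Ordinal → Ordinal} {l : Ordinal → ℕ} {L : ℕ}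

def IsDiamondStep (α : Ordinal) (d : Ordinal → Ordinal) (l : Ordinal → ℕ) (L : ℕ)
    (β γ : Ordinal) : Prop :=
  γ < β ∧
    (¬ IsSuccLimit β → l β ≤ L ∧ β = γ + 1 ∧ l γ < L) ∧
    (IsSuccLimit β → l β ≤ L ∧ d γ = β ∧ l γ = L ∧
      ∀ γ' : Ordinal, γ' < α → d γ' = β → l γ' = L → γ' = γ)

theorem isDiamondPath_iff {n : ℕ} {b : ℕ → Ordinal} :
    IsDiamondPath α d l L n b ↔ IsRelPath (IsDiamondStep α d l L) n b α 0 := by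
  simp only [IsDiamondPath, IsRelPath, IsDiamondStep, ← forall_and]

theorem IsDiamondStep.level_le {β γ : Ordinal} (h : IsDiamondStep α d l L β γ) : l γ ≤ L := by
  by_cases hβ : IsSuccLimit β
  · exact (h.2.2 hβ).2.2.1.le
  · exact (h.2.1 hβ).2.2.le

theorem IsDiamondStep.eq {β γ γ' : Ordinal} (hβα : β ≤ α) (h : IsDiamondStep α d l L β γ)
    (h' : IsDiamondStep α d l L β γ') : γ' = γ := by
  by_cases hβ : IsSuccLimit β
  · obtain ⟨-, hdγ', hlγ', -⟩ := h'.2.2 hβ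
    exact (h.2.2 hβ).2.2.2 γ' (h'.1.trans_le hβα) hdγ' hlγ'
  · have hsucc : γ' + 1 = γ + 1 := ((h'.2.1 hβ).2.1).symm.trans (h.2.1 hβ).2.1
    rw [← succ_eq_add_one, ← succ_eq_add_one] at hsucc
    exact succ_injective hsucc

theorem isDiamondStep_add_one {γ : Ordinal} (hL : l (γ + 1) ≤ L) (hl : l (γ + 1) = l γ + 1) :
    IsDiamondStep α d l L (γ + 1) γ := by
  refine ⟨lt_add_one γ, fun _ => ⟨hL, rfl, by omega⟩, fun hlim => ?_⟩
  exact absurd hlim (succ_eq_add_one γ ▸ not_isSuccLimit_succ γ)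

theorem isDiamondStep_of_isSuccLimit {a : Ordinal → ℕ → Ordinal} {μ : Ordinal}
    (hμ : IsSuccLimit μ) (hμα : μ ≤ α) (hL : l μ ≤ L) (hlt : ∀ k, a μ k < μ)
    (hfib : ∀ β < α, d β = μ ↔ ∃ k, β = a μ k) (hlev : ∀ k, l (a μ k) = l μ + k) : IsDiamondStep α d l L μ (a μ (L - l μ)) := by
  have hlevL : l (a μ (L - l μ)) = L := by rw [hlev]; omega
  refine ⟨hlt _, fun h => absurd hμ h, fun _ => ⟨hL, ?_, hlevL, fun γ hγα hdγ hlγ => ?_⟩⟩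
  · exact (hfib _ ((hlt _).trans_le hμα)).2 ⟨_, rfl⟩
  · obtain ⟨k, rfl⟩ := (hfib γ hγα).1 hdγ
    rw [hlev] at hlγ
    rw [show k = L - l μ by omega]

theorem exists_isDiamondStep {a : Ordinal → ℕ → Ordinal} (hstr : AuxStruct α d l a)
    {β : Ordinal} (hβα : β ≤ α) (hβ0 : β ≠ 0) (hL : l β ≤ L) :
    ∃ γ, IsDiamondStep α d l L β γ := by
  obtain ⟨-, -, -, -, -, hb, -, -, -, hl⟩ := hstr
  rcases Ordinal.zero_or_succ_or_isSuccLimit β with h0 | ⟨γ, rfl⟩ | hlim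
  · exact absurd h0 hβ0
  · rw [succ_eq_add_one] at hβα hL ⊢
    exact ⟨γ, isDiamondStep_add_one hL (hl γ ((lt_add_one γ).trans_le hβα))⟩
  · obtain ⟨-, hlt, -, hfib, hlev⟩ := hb β hlim hβα
    exact ⟨_, isDiamondStep_of_isSuccLimit hlim hβα hL hlt hfib hlev⟩

end DiamondStep

theorem diamond_path_exists_unique_general
    (α : Ordinal)
    (d : Ordinal → Ordinal) (l : Ordinal → ℕ) (a : Ordinal → ℕ → Ordinal)
    (hstr : AuxStruct α d l a) :
    ∀ L : ℕ, 1 ≤ L →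
      ∃ (n : ℕ) (b : ℕ → Ordinal), IsDiamondPath α d l L n b ∧
        ∀ (n' : ℕ) (b' : ℕ → Ordinal), IsDiamondPath α d l L n' b' →
          n' = n ∧ ∀ i : ℕ, i ≤ n → b' i = b i := by
  intro L hL
  have hlα : l α ≤ L := hstr.2.2.2.2.2.2.1 ▸ hL
  obtain ⟨n, b, hb⟩ := exists_isRelPath (P := fun β => β ≤ α ∧ l β ≤ L)
    (fun _ _ h => h.1) (fun _ _ hβ h => ⟨h.1.le.trans hβ.1, h.level_le⟩)
    (fun _ hβ hβ0 => exists_isDiamondStep hstr hβ.1 hβ0 hβ.2) α ⟨le_rfl, hlα⟩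
  refine ⟨n, b, isDiamondPath_iff.2 hb, fun n' b' hb' => ?_⟩
  exact IsRelPath.unique (P := (· ≤ α)) (fun _ _ _ hβ h h' => h'.eq hβ h)
    (fun _ _ hβ h => h.1.le.trans hβ) (fun _ h => not_lt_zero h.1) le_rfl hb (isDiamondPath_iff.1 hb')

/-- For every `L ≥ 1` there exist a unique `n(L)` and a unique finite sequence
`β_L^0 = α > β_L^1 > ⋯ > β_L^{n(L)} = 0` forming the `⋄`-path at level `L`. -/
theorem diamond_path_exists_unique
    (α : Ordinal) (hαlim : Order.IsSuccLimit α) (hαctble : α < (Cardinal.aleph 1).ord)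
    (d : Ordinal → Ordinal) (l : Ordinal → ℕ) (a : Ordinal → ℕ → Ordinal)
    (hstr : AuxStruct α d l a) :
    ∀ L : ℕ, 1 ≤ L →
      ∃ (n : ℕ) (b : ℕ → Ordinal), IsDiamondPath α d l L n b ∧
        ∀ (n' : ℕ) (b' : ℕ → Ordinal), IsDiamondPath α d l L n' b' →
          n' = n ∧ ∀ i : ℕ, i ≤ n → b' i = b i :=
  diamond_path_exists_unique_general α d l a hstr
end

section
/- Fix a countable limit ordinal α and functions ⋄, ℓ, a satisfying conditions (a)–(d) of the auxiliary ordinal structure on [0,α], and for each L ≥ 1 let (β_L^i)_{i=0}^{n(L)} be the unique strictly decreasing sequence from α to 0 associated to L (so that for i < n(L): if β_L^i is isolated then ℓ(β_L^i) ≤ L, β_L^i = β_L^{i+1}+1 and ℓ(β_L^{i+1}) < L; if β_L^i is limit then ℓ(β_L^i) ≤ L, ⋄(β_L^{i+1}) = β_L^i and ℓ(β_L^{i+1}) = L). Then for every L ≥ 1 the sequence (β_L^i)_{i=0}^{n(L)} is a subsequence of (β_{L+1}^j)_{j=0}^{n(L+1)}; equivalently, since both sequences are strictly decreasing, {β_L^i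 : 0 ≤ i ≤ n(L)} ⊆ {β_{L+1}^j : 0 ≤ j ≤ n(L+1)}. -/
/-!
Every `γ < α` with `ℓ(γ) ≤ L` lies on the `⋄`-path at level `L`. Indeed, let `b k` be the
first node of the path with `b k ≤ γ`. If the preceding node is a successor `b k + 1`, then
`γ ≤ b k`. If it is a limit, it equals `⋄(b k)` and `ℓ(b k) = L`, so `b k < γ` would give
`L = ℓ(b k) < ℓ(γ)` by (c). Every node after the first has level at most `L ≤ L + 1`, so it
lies on the path at level `L + 1`.
-/

namespace IsDiamondPath

variable {α : Ordinal} {d : Ordinal → Ordinal} {l : Ordinal → ℕ} {L n : ℕ} {b : ℕ → Ordinal}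

theorem lt_of_pos (hb : IsDiamondPath α d l L n b) {i : ℕ} (hi₀ : 0 < i) (hin : i ≤ n) :
    b i < α := by
  obtain ⟨hb0, -, hdec, -⟩ := hb
  induction i with
  | zero => omega
  | succ i ih =>
    rcases Nat.eq_zero_or_pos i with rfl | hi
    · exact hb0 ▸ hdec 0 (by omega)
    · exact (hdec i (by omega)).trans (ih hi (by omega))

theorem level_succ_le (hb : IsDiamondPath α d l L n b) {i : ℕ} (hin : i < n) :
    l (b (i + 1)) ≤ L := by
  obtain ⟨hiso, hlim⟩ := hb.2.2.2 i hin
  by_cases h : Order.IsSuccLimit (b i)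
  · exact (hlim h).2.2.1.le
  · exact (hiso h).2.2.le

theorem exists_eq_of_level_le (hb : IsDiamondPath α d l L n b)
    (hc : ∀ β γ, β < α → β < γ → γ < d β → l β < l γ)
    {γ : Ordinal} (hγα : γ < α) (hγ : l γ ≤ L) : ∃ k ≤ n, b k = γ := by
  have hreach : ∃ k, k ≤ n ∧ b k ≤ γ := ⟨n, le_rfl, hb.2.1 ▸ zero_le⟩
  obtain ⟨hkn, hbk⟩ := Nat.find_spec hreach
  rcases hk : Nat.find hreach with _ | m
  · exact absurd (hb.1 ▸ hk ▸ hbk) (not_le.2 hγα)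
  have hmn : m < n := by omega
  have hγm : γ < b m := by
    have := Nat.find_min hreach (show m < Nat.find hreach by omega)
    exact not_le.1 fun h => this ⟨by omega, h⟩
  rw [hk] at hbk
  refine ⟨m + 1, by omega, le_antisymm hbk ?_⟩
  obtain ⟨hiso, hlim⟩ := hb.2.2.2 m hmn
  by_cases h : Order.IsSuccLimit (b m)
  · obtain ⟨-, hd, hl, -⟩ := hlim h
    refine not_lt.1 fun hlt => ?_
    have := hc _ γ (hbk.trans_lt hγα) hlt (hd ▸ hγm)
    omega
  · rwa [(hiso h).2.1, Order.lt_add_one_iff] at hγm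

end IsDiamondPath

theorem diamond_path_subsequence_general
    (α : Ordinal)
    (d : Ordinal → Ordinal) (l : Ordinal → ℕ) (a : Ordinal → ℕ → Ordinal)
    (hstr : AuxStruct α d l a) :
    ∀ L : ℕ, 1 ≤ L →
      ∀ (n : ℕ) (b : ℕ → Ordinal) (n' : ℕ) (b' : ℕ → Ordinal),
        IsDiamondPath α d l L n b → IsDiamondPath α d l (L + 1) n' b' →
        ∀ i : ℕ, i ≤ n → ∃ j : ℕ, j ≤ n' ∧ b' j = b i := by
  intro L _ n b n' b' hb hb' i hin
  have hc : ∀ β γ, β < α → β < γ → γ < d β → l β < l γ :=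
    fun β γ hβ hβγ hγ => (hstr.2.2.2.2.2.2.2.2.1 β γ hβ hβγ hγ).1
  obtain _ | i := i
  · exact ⟨0, zero_le, hb'.1.trans hb.1.symm⟩
  · exact hb'.exists_eq_of_level_le hc (hb.lt_of_pos i.succ_pos hin)
      ((hb.level_succ_le (by omega)).trans L.le_succ)

/-- The `⋄`-path at level `L` is a subsequence of the `⋄`-path at level `L+1`:
every member of the former occurs among the members of the latter. -/
theorem diamond_path_subsequence
    (α : Ordinal) (hαlim : Order.IsSuccLimit α) (hαctble : α < (Cardinal.aleph 1).ord)
    (d : Ordinal → Ordinal) (l : Ordinal → ℕ) (a : Ordinal → ℕ → Ordinal)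
    (hstr : AuxStruct α d l a) :
    ∀ L : ℕ, 1 ≤ L →
      ∀ (n : ℕ) (b : ℕ → Ordinal) (n' : ℕ) (b' : ℕ → Ordinal),
        IsDiamondPath α d l L n b → IsDiamondPath α d l (L + 1) n' b' →
        ∀ i : ℕ, i ≤ n → ∃ j : ℕ, j ≤ n' ∧ b' j = b i :=
  diamond_path_subsequence_general α d l a hstr
end

section
/- Fix a countable limit ordinal α and functions ⋄, ℓ, a satisfying conditions (a)–(d) of the auxiliary ordinal structure on [0,α], and for each L ≥ 1 let (β_L^i)_{i=0}^{n(L)} be the unique strictly decreasing sequence from α to 0 associated to L (so that for i < n(L): if β_L^i is isolated then ℓ(β_L^i) ≤ L, β_L^i = β_L^{i+1}+1 and ℓ(β_L^{i+1}) < L; if β_L^i is limit then ℓ(β_L^i) ≤ L, ⋄(β_L^{i+1}) = β_L^i and ℓ(β_L^{i+1}) = L). Then ⋃_{L ≥ 1} {β_L^j : 0 ≤ j ≤ n(L)} = [0,α], i.e., every ordinal γ ≤ α occurs as some β_L^j. -/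
/-!
At level `L` the path is forced: from a limit `β` it steps to `a β (L - ℓ β)`, the unique
`⋄`-predecessor of `β` of level `L`, and from `β + 1` it steps to `β`. Given `γ ≤ α` with
`⋄`-chain `γ, ⋄ γ, …, ⋄^s γ = α`, take `L` at least the level of every member of the chain.
Once the level-`L` path reaches `⋄ γ`, it cannot jump over `γ`: by (c), every `δ ∈ (γ, ⋄ γ)` of
level at most `L` steps to an ordinal `≥ γ`. Walking down the chain, every `⋄^i γ` lies on the path.
-/

open Order

section PathStep

open Classical in
noncomputable def pathStep (l : Ordinal → ℕ) (a : Ordinal → ℕ → Ordinal) (L : ℕ)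
    (β : Ordinal) : Ordinal :=
  if IsSuccLimit β then a β (L - l β) else Ordinal.pred β

variable {l : Ordinal → ℕ} {a : Ordinal → ℕ → Ordinal} {L : ℕ} {β : Ordinal}

theorem pathStep_of_isSuccLimit (h : IsSuccLimit β) : pathStep l a L β = a β (L - l β) :=
  if_pos h

theorem pathStep_of_not_isSuccLimit (h : ¬IsSuccLimit β) :
    pathStep l a L β = Ordinal.pred β :=
  if_neg h

theorem pathStep_zero : pathStep l a L 0 = 0 := by
  rw [pathStep_of_not_isSuccLimit Ordinal.not_isSuccLimit_zero, Ordinal.pred_zero]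

theorem not_isSuccPrelimit_of_not_isSuccLimit (hβ0 : β ≠ 0) (h : ¬IsSuccLimit β) :
    ¬IsSuccPrelimit β :=
  fun hpre => h (Ordinal.isSuccLimit_iff.2 ⟨hβ0, hpre⟩)

theorem pathStep_add_one (hβ0 : β ≠ 0) (h : ¬IsSuccLimit β) : pathStep l a L β + 1 = β := by
  rw [pathStep_of_not_isSuccLimit h, ← Order.succ_eq_add_one,
    Ordinal.succ_pred_eq_iff_not_isSuccPrelimit]
  exact not_isSuccPrelimit_of_not_isSuccLimit hβ0 h

end PathStep

namespace IsDiamondPath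

variable {α : Ordinal} {d : Ordinal → Ordinal} {l : Ordinal → ℕ} {L n : ℕ} {b : ℕ → Ordinal}

theorem le_top (hb : IsDiamondPath α d l L n b) {j : ℕ} (hj : j ≤ n) : b j ≤ α := by
  induction j with
  | zero => exact hb.1.le
  | succ j ih => exact ((hb.2.2.1 j hj).trans_le (ih (by omega))).le

end IsDiamondPath

namespace AuxStruct

variable {α : Ordinal} {d : Ordinal → Ordinal} {l : Ordinal → ℕ} {a : Ordinal → ℕ → Ordinal}
  {L : ℕ} {β γ δ : Ordinal}

theorem pathStep_lt (hstr : AuxStruct α d l a) (hβ0 : β ≠ 0) (hβα : β ≤ α) :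
    pathStep l a L β < β := by
  obtain ⟨-, -, -, -, -, hb, -⟩ := hstr
  by_cases hlim : IsSuccLimit β
  · rw [pathStep_of_isSuccLimit hlim]
    exact (hb β hlim hβα).2.1 _
  · rw [pathStep_of_not_isSuccLimit hlim, Ordinal.pred_lt_iff_not_isSuccPrelimit]
    exact not_isSuccPrelimit_of_not_isSuccLimit hβ0 hlim

theorem level_pathStep_of_isSuccLimit (hstr : AuxStruct α d l a) (hlim : IsSuccLimit β)
    (hβα : β ≤ α) (hlβ : l β ≤ L) : l (pathStep l a L β) = L := by
  obtain ⟨-, -, -, -, -, hb, -⟩ := hstr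
  rw [pathStep_of_isSuccLimit hlim, (hb β hlim hβα).2.2.2.2]
  omega

theorem diamond_pathStep_of_isSuccLimit (hstr : AuxStruct α d l a) (hlim : IsSuccLimit β)
    (hβα : β ≤ α) : d (pathStep l a L β) = β := by
  obtain ⟨-, -, -, haα, -, hb, -⟩ := hstr
  rw [pathStep_of_isSuccLimit hlim]
  exact ((hb β hlim hβα).2.2.2.1 _ (haα β hlim hβα _)).2 ⟨_, rfl⟩

theorem eq_pathStep_of_diamond_eq (hstr : AuxStruct α d l a) (hγα : γ < α) (hdγ : d γ = β)
    (hlγ : l γ = L) : γ = pathStep l a L β := by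
  obtain ⟨hd, -, -, -, -, hb, -⟩ := hstr
  obtain ⟨hlim, -, hβα⟩ := hdγ ▸ hd γ hγα
  obtain ⟨-, -, -, hiff, hlev⟩ := hb β hlim hβα
  obtain ⟨k, rfl⟩ := (hiff γ hγα).1 hdγ
  rw [pathStep_of_isSuccLimit hlim, hlev k] at *
  congr 1
  omega

theorem level_pathStep_add_one (hstr : AuxStruct α d l a) (hβ0 : β ≠ 0)
    (hlim : ¬IsSuccLimit β) (hβα : β ≤ α) : l (pathStep l a L β) + 1 = l β := by
  have hlt := (hstr.pathStep_lt (L := L) hβ0 hβα).trans_le hβα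
  obtain ⟨-, -, -, -, -, -, -, -, -, hsucc⟩ := hstr
  rw [← hsucc _ hlt, pathStep_add_one hβ0 hlim]

theorem level_pathStep_le (hstr : AuxStruct α d l a) (hβ0 : β ≠ 0) (hβα : β ≤ α)
    (hlβ : l β ≤ L) : l (pathStep l a L β) ≤ L := by
  by_cases hlim : IsSuccLimit β
  · exact (hstr.level_pathStep_of_isSuccLimit hlim hβα hlβ).le
  · have := hstr.level_pathStep_add_one (L := L) hβ0 hlim hβα
    omega

theorem mapsTo_pathStep (hstr : AuxStruct α d l a) (hL : 1 ≤ L) :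
    Set.MapsTo (pathStep l a L) {β | β ≤ α ∧ l β ≤ L} {β | β ≤ α ∧ l β ≤ L} := by
  rintro β ⟨hβα, hlβ⟩
  rcases eq_or_ne β 0 with rfl | hβ0
  · have hl0 : l 0 = 1 := hstr.2.2.2.2.2.2.2.1
    rw [pathStep_zero]
    exact ⟨hβα, hl0 ▸ hL⟩
  · exact ⟨(hstr.pathStep_lt hβ0 hβα).le.trans hβα, hstr.level_pathStep_le hβ0 hβα hlβ⟩

theorem exists_iterate_pathStep_eq_zero (hstr : AuxStruct α d l a) (hβα : β ≤ α) :
    ∃ n, (pathStep l a L)^[n] β = 0 := by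
  induction β using WellFoundedLT.induction with
  | _ β ih =>
    rcases eq_or_ne β 0 with rfl | hβ0
    · exact ⟨0, rfl⟩
    · have hlt := hstr.pathStep_lt (L := L) hβ0 hβα
      obtain ⟨n, hn⟩ := ih _ hlt (hlt.le.trans hβα)
      exact ⟨n + 1, hn⟩

theorem isDiamondPath_iterate (hstr : AuxStruct α d l a) (hL : 1 ≤ L) {n : ℕ}
    (hn : (pathStep l a L)^[n] α = 0) (hpos : ∀ i < n, (pathStep l a L)^[i] α ≠ 0) :
    IsDiamondPath α d l L n fun i => (pathStep l a L)^[i] α := by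
  have hlα : l α = 1 := hstr.2.2.2.2.2.2.1
  have hinv : ∀ i, (pathStep l a L)^[i] α ≤ α ∧ l ((pathStep l a L)^[i] α) ≤ L := fun i =>
    (hstr.mapsTo_pathStep hL).iterate i ⟨le_rfl, hlα ▸ hL⟩
  refine ⟨rfl, hn, fun i hi => ?_, fun i hi => ?_⟩ <;>
    simp only [Function.iterate_succ_apply'] <;>
    obtain ⟨hβα, hlβ⟩ := hinv i <;>
    have hβ0 := hpos i hi <;>
    generalize (pathStep l a L)^[i] α = β at hβ0 hβα hlβ ⊢
  · exact hstr.pathStep_lt hβ0 hβα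
  refine ⟨fun hlim => ⟨hlβ, (pathStep_add_one hβ0 hlim).symm, ?_⟩,
    fun hlim => ⟨hlβ, hstr.diamond_pathStep_of_isSuccLimit hlim hβα,
      hstr.level_pathStep_of_isSuccLimit hlim hβα hlβ,
      fun γ hγα hdγ hlγ => hstr.eq_pathStep_of_diamond_eq hγα hdγ hlγ⟩⟩
  have := hstr.level_pathStep_add_one (L := L) hβ0 hlim hβα
  omega

theorem exists_isDiamondPath_of_iterate_eq (hstr : AuxStruct α d l a) (hL : 1 ≤ L)
    (hγ : ∃ j, (pathStep l a L)^[j] α = γ) :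
    ∃ n b, IsDiamondPath α d l L n b ∧ ∃ j ≤ n, b j = γ := by
  classical
  have hzero := hstr.exists_iterate_pathStep_eq_zero (L := L) le_rfl
  obtain ⟨j, rfl⟩ := hγ
  refine ⟨Nat.find hzero, _, hstr.isDiamondPath_iterate hL (Nat.find_spec hzero)
    fun i hi => Nat.find_min hzero hi, min j (Nat.find hzero), min_le_right _ _, ?_⟩
  rcases le_total j (Nat.find hzero) with hj | hj
  · rw [min_eq_left hj]
  · rw [min_eq_right hj, ← Nat.sub_add_cancel hj, Function.iterate_add_apply,
      Nat.find_spec hzero, Function.iterate_fixed pathStep_zero]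

theorem le_pathStep (hstr : AuxStruct α d l a) (hγα : γ < α) (hlγ : l γ ≤ L) (hγδ : γ < δ)
    (hδγ : δ < d γ) (hlδ : l δ ≤ L) : γ ≤ pathStep l a L δ := by
  have hδα : δ ≤ α := hδγ.le.trans (hstr.1 γ hγα).2.2
  have hδ0 : δ ≠ 0 := (pos_of_gt hγδ).ne'
  by_cases hlim : IsSuccLimit δ
  · by_contra! hlt
    -- `γ` would lie strictly between `pathStep δ` and its `⋄`-successor `δ`, so by (c)
    -- its level would exceed `ℓ (pathStep δ) = L`.
    have hstepα := (hstr.pathStep_lt (L := L) hδ0 hδα).trans_le hδα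
    have hdstep := hstr.diamond_pathStep_of_isSuccLimit (L := L) hlim hδα
    have hc : l (pathStep l a L δ) < l γ :=
      (hstr.2.2.2.2.2.2.2.2.1 _ γ hstepα hlt (hdstep.symm ▸ hγδ)).1
    rw [hstr.level_pathStep_of_isSuccLimit hlim hδα hlδ] at hc
    omega
  · rw [← pathStep_add_one (l := l) (a := a) (L := L) hδ0 hlim, Order.lt_add_one_iff] at hγδ
    exact hγδ

theorem exists_iterate_pathStep_eq_of_le_of_lt_diamond (hstr : AuxStruct α d l a) (hγα : γ < α)
    (hlγ : l γ ≤ L) (hγδ : γ ≤ δ) (hδγ : δ < d γ) (hlδ : l δ ≤ L) :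
    ∃ i, (pathStep l a L)^[i] δ = γ := by
  induction δ using WellFoundedLT.induction with
  | _ δ ih =>
    rcases hγδ.eq_or_lt with rfl | hlt
    · exact ⟨0, rfl⟩
    have hδ0 : δ ≠ 0 := (pos_of_gt hlt).ne'
    have hδα : δ ≤ α := hδγ.le.trans (hstr.1 γ hγα).2.2
    have hstep := hstr.pathStep_lt (L := L) hδ0 hδα
    obtain ⟨i, hi⟩ := ih _ hstep (hstr.le_pathStep hγα hlγ hlt hδγ hlδ) (hstep.trans hδγ)
      (hstr.level_pathStep_le hδ0 hδα hlδ)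
    exact ⟨i + 1, hi⟩

theorem exists_eq_a_diamond (hstr : AuxStruct α d l a) (hγα : γ < α) :
    ∃ k, γ = a (d γ) k ∧ l γ = l (d γ) + k := by
  obtain ⟨hd, -, -, -, -, hb, -⟩ := hstr
  obtain ⟨hlim, -, hμα⟩ := hd γ hγα
  obtain ⟨-, -, -, hiff, hlev⟩ := hb (d γ) hlim hμα
  obtain ⟨k, hk⟩ := (hiff γ hγα).1 rfl
  refine ⟨k, hk, ?_⟩
  conv_lhs => rw [hk]
  exact hlev k

theorem level_diamond_le (hstr : AuxStruct α d l a) (hγα : γ < α) : l (d γ) ≤ l γ := by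
  obtain ⟨k, -, hk⟩ := hstr.exists_eq_a_diamond hγα
  omega

theorem le_pathStep_diamond (hstr : AuxStruct α d l a) (hγα : γ < α) (hlγ : l γ ≤ L) :
    γ ≤ pathStep l a L (d γ) := by
  obtain ⟨k, hγk, hlk⟩ := hstr.exists_eq_a_diamond hγα
  obtain ⟨hlim, -, hμα⟩ := hstr.1 γ hγα
  rw [pathStep_of_isSuccLimit hlim]
  exact hγk.trans_le ((hstr.2.2.2.2.2.1 _ hlim hμα).1.monotone (by omega))

theorem exists_iterate_pathStep_eq_of_iterate_eq_diamond (hstr : AuxStruct α d l a)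
    (hγα : γ < α) (hlγ : l γ ≤ L) {x : Ordinal} (hx : ∃ j, (pathStep l a L)^[j] x = d γ) :
    ∃ j, (pathStep l a L)^[j] x = γ := by
  obtain ⟨hlim, hμ0, hμα⟩ := hstr.1 γ hγα
  have hlμ := (hstr.level_diamond_le hγα).trans hlγ
  obtain ⟨j, hj⟩ := hx
  obtain ⟨i, hi⟩ := hstr.exists_iterate_pathStep_eq_of_le_of_lt_diamond hγα hlγ
    (hstr.le_pathStep_diamond hγα hlγ) (hstr.pathStep_lt hμ0.ne' hμα)
    (hstr.level_pathStep_of_isSuccLimit hlim hμα hlμ).le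
  refine ⟨i + 1 + j, ?_⟩
  rw [Function.iterate_add_apply, hj]
  exact hi

theorem exists_iterate_pathStep_eq_of_iterate_diamond_eq (hstr : AuxStruct α d l a) {s : ℕ}
    (hγα : γ ≤ α) (hs : d^[s] γ = α) (hlev : ∀ i ≤ s, l (d^[i] γ) ≤ L) :
    ∃ j, (pathStep l a L)^[j] α = γ := by
  induction s generalizing γ with
  | zero => exact ⟨0, hs.symm⟩
  | succ s ih =>
    rcases hγα.eq_or_lt with rfl | hγα
    · exact ⟨0, rfl⟩
    exact hstr.exists_iterate_pathStep_eq_of_iterate_eq_diamond hγα (hlev 0 (Nat.zero_le _))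
      (ih (hstr.1 γ hγα).2.2 hs fun i hi => hlev (i + 1) (by omega))

theorem exists_iterate_diamond_eq (hstr : AuxStruct α d l a) (hγα : γ ≤ α) :
    ∃ s, d^[s] γ = α := by
  rcases hγα.eq_or_lt with rfl | hlt
  · exact ⟨0, rfl⟩
  · obtain ⟨-, -, -, -, hchain, -⟩ := hstr
    obtain ⟨s, -, -, hs⟩ := hchain γ hlt
    exact ⟨s, hs⟩

end AuxStruct

theorem diamond_paths_cover_interval_general
    (α : Ordinal)
    (d : Ordinal → Ordinal) (l : Ordinal → ℕ) (a : Ordinal → ℕ → Ordinal)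
    (hstr : AuxStruct α d l a) :
    (∀ L : ℕ, 1 ≤ L → ∀ (n : ℕ) (b : ℕ → Ordinal), IsDiamondPath α d l L n b →
      ∀ j : ℕ, j ≤ n → b j ≤ α) ∧
    (∀ γ : Ordinal, γ ≤ α →
      ∃ (L : ℕ) (n : ℕ) (b : ℕ → Ordinal), 1 ≤ L ∧ IsDiamondPath α d l L n b ∧
        ∃ j : ℕ, j ≤ n ∧ b j = γ) := by
  refine ⟨fun L _ n b hb j hj => hb.le_top hj, fun γ hγα => ?_⟩
  obtain ⟨s, hs⟩ := hstr.exists_iterate_diamond_eq hγα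
  obtain ⟨L, hL⟩ := ((Set.finite_Iic s).image fun i => l (d^[i] γ)).bddAbove
  have hlev : ∀ i ≤ s, l (d^[i] γ) ≤ L := fun i hi => hL ⟨i, hi, rfl⟩
  have hL1 : 1 ≤ L := le_trans (hstr.2.2.1 γ hγα : 1 ≤ l γ) (hlev 0 (Nat.zero_le s))
  obtain ⟨n, b, hb, j, hjn, hbj⟩ := hstr.exists_isDiamondPath_of_iterate_eq hL1
    (hstr.exists_iterate_pathStep_eq_of_iterate_diamond_eq hγα hs hlev)
  exact ⟨L, n, b, hL1, hb, j, hjn, hbj⟩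

/-- The union over all levels `L ≥ 1` of the sets of members of the `⋄`-paths is the whole
interval `[0, α]`: every member of every path lies in `[0, α]`, and conversely every
ordinal `γ ≤ α` occurs as a member `β_L^j` of the path at some level `L ≥ 1`. -/
theorem diamond_paths_cover_interval
    (α : Ordinal) (hαlim : Order.IsSuccLimit α) (hαctble : α < (Cardinal.aleph 1).ord)
    (d : Ordinal → Ordinal) (l : Ordinal → ℕ) (a : Ordinal → ℕ → Ordinal)
    (hstr : AuxStruct α d l a) :
    (∀ L : ℕ, 1 ≤ L → ∀ (n : ℕ) (b : ℕ → Ordinal), IsDiamondPath α d l L n b →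
      ∀ j : ℕ, j ≤ n → b j ≤ α) ∧
    (∀ γ : Ordinal, γ ≤ α →
      ∃ (L : ℕ) (n : ℕ) (b : ℕ → Ordinal), 1 ≤ L ∧ IsDiamondPath α d l L n b ∧
        ∃ j : ℕ, j ≤ n ∧ b j = γ) :=
  diamond_paths_cover_interval_general α d l a hstr
end

section
/- Fix a countable limit ordinal α and functions ⋄, ℓ, a satisfying conditions (a)–(d) of the auxiliary ordinal structure on [0,α]. Then for all ordinals γ, β with 0 ≤ γ ≤ β ≤ α there exists a finite strictly increasing sequence of ordinals δ_0, δ_1, …, δ_n such that δ_0 = γ, δ_n = β, and for every j < n: δ_{j+1} = ⋄(δ_j) if ⋄(δ_j) ≤ β, and δ_{j+1} = δ_j + 1 otherwise. -/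
/-!
Induction on `β`. At a successor `β = b + 1`, extend a sequence ending at `b` by the step
`b ↦ b + 1`: every `⋄`-value is a limit, so none equals `b + 1` and the earlier steps do not
change when the target grows from `b` to `b + 1`. At a limit `β`, first go to the least
`t = a(β, k)` with `γ ≤ t`, for which `⋄(t) = β`; by (c), a term `x < t` of that sequence with
`t < ⋄(x)` has `⋄(x) ≥ ⋄(t) = β`, and by minimality of `k` also `⋄(x) ≠ β`, so again the earlier
steps are unchanged, and the last step is `t ↦ ⋄(t) = β`.
-/

open Order Set

noncomputable def diamondStep (d : Ordinal → Ordinal) (β x : Ordinal) : Ordinal :=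
  if d x ≤ β then d x else x + 1

structure IsDiamondChain (d : Ordinal → Ordinal) (γ β : Ordinal) (n : ℕ) (δ : ℕ → Ordinal) :
    Prop where
  zero : δ 0 = γ
  last : δ n = β
  lt_succ : ∀ j < n, δ j < δ (j + 1)
  step : ∀ j < n, δ (j + 1) = diamondStep d β (δ j)

section DiamondChain

variable {d : Ordinal → Ordinal} {γ β β' x : Ordinal} {n : ℕ} {δ : ℕ → Ordinal}

theorem diamondStep_of_le (h : d x ≤ β) : diamondStep d β x = d x := if_pos h

theorem diamondStep_of_not_le (h : ¬ d x ≤ β) : diamondStep d β x = x + 1 := if_neg h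

theorem isDiamondChain_refl (d : Ordinal → Ordinal) (γ : Ordinal) :
    IsDiamondChain d γ γ 0 fun _ => γ :=
  ⟨rfl, rfl, fun _ h => absurd h (Nat.not_lt_zero _), fun _ h => absurd h (Nat.not_lt_zero _)⟩

theorem IsDiamondChain.mem_Ico (h : IsDiamondChain d γ β n δ) {j : ℕ} (hj : j < n) :
    δ j ∈ Ico γ β := by
  have hmono : StrictMonoOn δ (Iic n) :=
    strictMonoOn_Iic_of_lt_succ fun m hm => by simpa using h.lt_succ m hm
  refine ⟨?_, h.last ▸ hmono (mem_Iic.2 hj.le) (mem_Iic.2 le_rfl) hj⟩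
  rw [← h.zero]
  exact hmono.monotoneOn (mem_Iic.2 (Nat.zero_le n)) (mem_Iic.2 hj.le) (Nat.zero_le j)

/-- `hgap` says that aiming at `β` instead of `β'` does not change the earlier steps. -/
theorem IsDiamondChain.snoc (h : IsDiamondChain d γ β' n δ) (hβ' : β' < β)
    (hstep : diamondStep d β β' = β) (hgap : ∀ x ∈ Ico γ β', d x ≤ β → d x ≤ β') :
    IsDiamondChain d γ β (n + 1) (Function.update δ (n + 1) β) := by
  have hstep_eq : ∀ j < n, diamondStep d β (δ j) = diamondStep d β' (δ j) := fun j hj => by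
    have hiff : d (δ j) ≤ β ↔ d (δ j) ≤ β' :=
      ⟨hgap _ (h.mem_Ico hj), fun hle => hle.trans hβ'.le⟩
    simp only [diamondStep, hiff]
  refine ⟨by simp [h.zero], by simp, fun j hj => ?_, fun j hj => ?_⟩ <;>
    obtain hj | rfl := Nat.lt_succ_iff_lt_or_eq.1 hj
  · simpa [Function.update_of_ne (show j ≠ n + 1 by omega),
      Function.update_of_ne (show j + 1 ≠ n + 1 by omega)] using h.lt_succ j hj
  · simpa [h.last] using hβ'
  · simpa [Function.update_of_ne (show j ≠ n + 1 by omega),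
      Function.update_of_ne (show j + 1 ≠ n + 1 by omega), hstep_eq j hj] using h.step j hj
  · simpa [h.last] using hstep.symm

end DiamondChain

namespace AuxStruct

variable {α : Ordinal} {d : Ordinal → Ordinal} {l : Ordinal → ℕ} {a : Ordinal → ℕ → Ordinal}
  {β γ t x : Ordinal}

theorem lt_diamond (hstr : AuxStruct α d l a) (hx : x < α) : x < d x := by
  obtain ⟨s, hs, hlt, -⟩ := hstr.2.2.2.2.1 x hx
  simpa using hlt 0 hs

theorem diamond_le_diamond (hstr : AuxStruct α d l a) (hx : x < α) (hxt : x < t)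
    (htx : t < d x) : d t ≤ d x :=
  (hstr.2.2.2.2.2.2.2.2.1 x t hx hxt htx).2

theorem diamond_ne_add_one (hstr : AuxStruct α d l a) (hx : x < α) (b : Ordinal) :
    d x ≠ b + 1 :=
  fun h => (hstr.1 x hx).1.succ_ne b (by rw [h, Order.succ_eq_add_one])

/-- The witness is the first term `t` of the sequence `a(β, ·)` with `γ ≤ t`. -/
theorem exists_diamond_eq (hstr : AuxStruct α d l a) (hβ : IsSuccLimit β) (hβα : β ≤ α)
    (hγβ : γ < β) : ∃ t, γ ≤ t ∧ t < β ∧ d t = β ∧ ∀ x ∈ Ico γ t, d x ≠ β := by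
  obtain ⟨hmono, hlt, hcofinal, hpreimage, -⟩ := hstr.2.2.2.2.2.1 β hβ hβα
  have hex : ∃ k, γ ≤ a β k := (hcofinal γ hγβ).imp fun _ => le_of_lt
  have hltα : ∀ k, a β k < α := fun k => (hlt k).trans_le hβα
  refine ⟨a β (Nat.find hex), Nat.find_spec hex, hlt _,
    (hpreimage _ (hltα _)).2 ⟨_, rfl⟩, fun x hx hdx => ?_⟩
  obtain ⟨k, rfl⟩ := (hpreimage x (hx.2.trans (hltα _))).1 hdx
  exact Nat.find_min hex (hmono.lt_iff_lt.1 hx.2) hx.1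

theorem exists_isDiamondChain (hstr : AuxStruct α d l a) (hγβ : γ ≤ β) (hβα : β ≤ α) :
    ∃ n δ, IsDiamondChain d γ β n δ := by
  induction β using Ordinal.limitRecOn generalizing γ with
  | zero =>
    obtain rfl := nonpos_iff_eq_zero.1 hγβ
    exact ⟨0, _, isDiamondChain_refl d 0⟩
  | add_one b ih =>
    obtain rfl | hγb := hγβ.eq_or_lt
    · exact ⟨0, _, isDiamondChain_refl d _⟩
    replace hγb := Order.lt_add_one_iff.1 hγb
    have hbα : b < α := (Order.lt_add_one_iff.2 le_rfl).trans_le hβα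
    obtain ⟨n, δ, hδ⟩ := ih hγb hbα.le
    -- `d x` is a limit, so `d x ≤ b + 1` forces `d x ≤ b`.
    have hle : ∀ x < α, d x ≤ b + 1 → d x ≤ b := fun x hx hle =>
      Order.lt_add_one_iff.1 (hle.lt_of_ne (hstr.diamond_ne_add_one hx b))
    refine ⟨n + 1, _, hδ.snoc (Order.lt_add_one_iff.2 le_rfl) (diamondStep_of_not_le ?_)
      fun x hx => hle x (hx.2.trans hbα)⟩
    exact fun h => (hstr.lt_diamond hbα).not_ge (hle b hbα h)
  | limit β hβ ih =>
    obtain rfl | hγβ := hγβ.eq_or_lt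
    · exact ⟨0, _, isDiamondChain_refl d _⟩
    obtain ⟨t, hγt, htβ, hdt, hunique⟩ := hstr.exists_diamond_eq hβ hβα hγβ
    have htα : t < α := htβ.trans_le hβα
    obtain ⟨n, δ, hδ⟩ := ih t htβ hγt htα.le
    refine ⟨n + 1, _, hδ.snoc htβ (hdt ▸ diamondStep_of_le le_rfl) fun x hx hdx => ?_⟩
    by_contra! htdx
    have hβdx : β ≤ d x := hdt ▸ hstr.diamond_le_diamond (hx.2.trans htα) hx.2 htdx
    exact hunique x hx (hdx.antisymm hβdx)

end AuxStruct

theorem diamond_increasing_sequence_general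
    (α : Ordinal) (d : Ordinal → Ordinal) (l : Ordinal → ℕ) (a : Ordinal → ℕ → Ordinal)
    (hstr : AuxStruct α d l a) :
    ∀ γ β : Ordinal, γ ≤ β → β ≤ α →
      ∃ (n : ℕ) (δ : ℕ → Ordinal), δ 0 = γ ∧ δ n = β ∧
        (∀ j : ℕ, j < n → δ j < δ (j + 1)) ∧
        (∀ j : ℕ, j < n →
          (d (δ j) ≤ β → δ (j + 1) = d (δ j)) ∧ (¬ d (δ j) ≤ β → δ (j + 1) = δ j + 1)) := by
  intro γ β hγβ hβα
  obtain ⟨n, δ, h⟩ := hstr.exists_isDiamondChain hγβ hβα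
  exact ⟨n, δ, h.zero, h.last, h.lt_succ, fun j hj =>
    ⟨fun hle => (h.step j hj).trans (diamondStep_of_le hle),
      fun hle => (h.step j hj).trans (diamondStep_of_not_le hle)⟩⟩

/-- For all `γ ≤ β ≤ α` there is a finite strictly increasing sequence from `γ` to `β`
whose steps are `δ_{j+1} = ⋄(δ_j)` whenever `⋄(δ_j) ≤ β` and `δ_{j+1} = δ_j + 1`
otherwise. -/
theorem diamond_increasing_sequence
    (α : Ordinal) (hαlim : Order.IsSuccLimit α) (hαctble : α < (Cardinal.aleph 1).ord)
    (d : Ordinal → Ordinal) (l : Ordinal → ℕ) (a : Ordinal → ℕ → Ordinal)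
    (hstr : AuxStruct α d l a) :
    ∀ γ β : Ordinal, γ ≤ β → β ≤ α →
      ∃ (n : ℕ) (δ : ℕ → Ordinal), δ 0 = γ ∧ δ n = β ∧
        (∀ j : ℕ, j < n → δ j < δ (j + 1)) ∧
        (∀ j : ℕ, j < n →
          (d (δ j) ≤ β → δ (j + 1) = d (δ j)) ∧ (¬ d (δ j) ≤ β → δ (j + 1) = δ j + 1)) :=
  diamond_increasing_sequence_general α d l a hstr
end

section
/- Let X be a metric space, β a countable ordinal, and B a subset of X belonging to the additive Borel class Σ⁰_{1+β}(X). Then there exist a nonempty well-founded tree T on ℕ with h^T_∅ ≤ β and a set Θ ⊆ X × T_max, all of whose sections Θ^t (t ∈ T_max) are open in X, such that B = B^{T,Θ}(∅). Moreover, T can be chosen so that for every non-terminal node t ∈ T and every l ∈ ℕ, the extension t⌢l belongs to T. -/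
/-!
Induction on `β`. An open set is represented by the one-node tree labelled by itself. A set
`⋃ n, (A n)ᶜ` with `A n ∈ Σ⁰_{1+γₙ}`, `γₙ < β`, is represented by joining the trees representing
the `A n` below a new root, the `n`-th one hanging from the node `[n]`: the root then has all
one-step extensions, its rank is `sup (γₙ + 1) ≤ β`, and the recursion for `B^{T,Θ}` at the
root is exactly the union of complements.
-/

theorem Ordinal.exists_lt_eq_one_add {γ β : Ordinal} (h1 : 1 ≤ γ) (hγ : γ < 1 + β) :
    ∃ δ < β, γ = 1 + δ := by
  obtain ⟨δ, rfl⟩ := exists_add_of_le h1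
  exact ⟨δ, lt_of_add_lt_add_left hγ, rfl⟩

/-- The data of the theorem for the set `B` and the rank bound `β`, with `h` and `BB`
characterized by their recursions. -/
structure TreeRepresentation (X : Type*) [TopologicalSpace X] (B : Set X) (β : Ordinal) where
  T : Set (List ℕ)
  Θ : Set (X × List ℕ)
  h : List ℕ → Ordinal
  BB : List ℕ → Set X
  nonempty : T.Nonempty
  prefix_mem : ∀ s t : List ℕ, s <+: t → t ∈ T → s ∈ T
  not_exists_branch : ¬ ∃ x : ℕ → ℕ, ∀ n : ℕ, List.ofFn (fun i : Fin n => x i) ∈ T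
  append_mem_of_nonterminal : ∀ t ∈ T, (∃ k : ℕ, t ++ [k] ∈ T) → ∀ m : ℕ, t ++ [m] ∈ T
  terminal_of_mem_Θ : ∀ p ∈ Θ, p.2 ∈ T ∧ ∀ k : ℕ, p.2 ++ [k] ∉ T
  isOpen_Θ : ∀ t : List ℕ, IsOpen {z : X | (z, t) ∈ Θ}
  h_eq : ∀ t ∈ T, h t = ⨆ k : {k : ℕ // t ++ [k] ∈ T}, (h (t ++ [k.1]) + 1)
  BB_of_terminal : ∀ t ∈ T, (∀ k : ℕ, t ++ [k] ∉ T) → BB t = {z : X | (z, t) ∈ Θ}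
  BB_of_nonterminal : ∀ t ∈ T, (∃ k : ℕ, t ++ [k] ∈ T) →
    BB t = ⋃ k : ℕ, ⋃ (_ : t ++ [k] ∈ T), (BB (t ++ [k]))ᶜ
  h_nil_le : h [] ≤ β
  BB_nil : BB [] = B

namespace TreeRepresentation

variable {X : Type*} [TopologicalSpace X]

theorem nil_mem {B : Set X} {β : Ordinal} (R : TreeRepresentation X B β) : [] ∈ R.T :=
  R.prefix_mem [] _ List.nil_prefix R.nonempty.some_mem

def ofIsOpen {B : Set X} (hB : IsOpen B) (β : Ordinal) : TreeRepresentation X B β where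
  T := {[]}
  Θ := {p | p.1 ∈ B ∧ p.2 = []}
  h _ := 0
  BB _ := B
  nonempty := Set.singleton_nonempty _
  prefix_mem := by
    rintro s t hst rfl
    exact List.prefix_nil.mp hst
  not_exists_branch := by
    rintro ⟨x, hx⟩
    simpa [List.ofFn_succ] using hx 1
  append_mem_of_nonterminal := by
    rintro t rfl ⟨k, hk⟩
    simp at hk
  terminal_of_mem_Θ := by
    rintro ⟨z, t⟩ ⟨-, rfl : t = []⟩
    simp
  isOpen_Θ := by
    rintro (_ | ⟨n, t⟩)
    · simpa using hB
    · simp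
  h_eq := by
    rintro t rfl
    have : IsEmpty {k : ℕ // [] ++ [k] ∈ ({[]} : Set (List ℕ))} := ⟨fun ⟨k, hk⟩ => by simp at hk⟩
    exact (ciSup_of_empty _).symm
  BB_of_terminal := by
    rintro t rfl -
    ext z
    simp
  BB_of_nonterminal := by
    rintro t rfl ⟨k, hk⟩
    simp at hk
  h_nil_le := zero_le
  BB_nil := rfl

def joinTree (T : ℕ → Set (List ℕ)) : Set (List ℕ)
  | [] => True
  | n :: t => t ∈ T n

@[simp]
theorem cons_mem_joinTree {T : ℕ → Set (List ℕ)} {n : ℕ} {t : List ℕ} :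
    n :: t ∈ joinTree T ↔ t ∈ T n :=
  Iff.rfl

noncomputable def iUnionCompl {A : ℕ → Set X} {γ : ℕ → Ordinal} {β : Ordinal}
    (R : ∀ n, TreeRepresentation X (A n) (γ n)) (hγ : ∀ n, γ n < β) :
    TreeRepresentation X (⋃ n, (A n)ᶜ) β where
  T := joinTree fun n => (R n).T
  Θ
    | (_, []) => False
    | (z, n :: t) => (z, t) ∈ (R n).Θ
  h
    | [] => ⨆ n, ((R n).h [] + 1)
    | n :: t => (R n).h t
  BB
    | [] => ⋃ n, ((R n).BB [])ᶜ
    | n :: t => (R n).BB t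
  nonempty := ⟨[], trivial⟩
  prefix_mem := by
    rintro (_ | ⟨m, s⟩) (_ | ⟨n, t⟩) hst ht
    · trivial
    · trivial
    · exact absurd (List.prefix_nil.mp hst) (List.cons_ne_nil _ _)
    · obtain ⟨rfl, hst'⟩ := List.cons_prefix_cons.mp hst
      exact (R m).prefix_mem s t hst' ht
  not_exists_branch := by
    rintro ⟨x, hx⟩
    refine (R (x 0)).not_exists_branch ⟨fun i => x (i + 1), fun n => ?_⟩
    simpa [List.ofFn_succ] using hx (n + 1)
  append_mem_of_nonterminal := by
    rintro (_ | ⟨n, t⟩) ht ⟨k, hk⟩ m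
    · exact (R m).nil_mem
    · exact (R n).append_mem_of_nonterminal t ht ⟨k, hk⟩ m
  terminal_of_mem_Θ := by
    rintro ⟨z, _ | ⟨n, t⟩⟩ hp
    · exact hp.elim
    · exact (R n).terminal_of_mem_Θ (z, t) hp
  isOpen_Θ := by
    rintro (_ | ⟨n, t⟩)
    · exact isOpen_const
    · exact (R n).isOpen_Θ t
  h_eq := by
    rintro (_ | ⟨n, t⟩) ht
    · exact ((Equiv.subtypeUnivEquiv fun n => (R n).nil_mem).iSup_comp
        (g := fun n => (R n).h [] + 1)).symm
    · exact (R n).h_eq t ht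
  BB_of_terminal := by
    rintro (_ | ⟨n, t⟩) ht hterm
    · exact absurd (R 0).nil_mem (hterm 0)
    · exact (R n).BB_of_terminal t ht hterm
  BB_of_nonterminal := by
    rintro (_ | ⟨n, t⟩) ht hk
    · simp [nil_mem]
    · exact (R n).BB_of_nonterminal t ht hk
  h_nil_le := Ordinal.iSup_le fun n => Order.add_one_le_of_lt (((R n).h_nil_le).trans_lt (hγ n))
  BB_nil := by simp only [BB_nil]

theorem nonempty_of_mem_Sigma0 {β : Ordinal} {B : Set X} (hB : B ∈ Sigma0 X (1 + β)) :
    Nonempty (TreeRepresentation X B β) := by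
  induction β using WellFoundedLT.induction generalizing B with
  | _ β IH =>
  rw [Sigma0] at hB
  rcases hB with ⟨-, hB⟩ | ⟨-, A, γ, hA, rfl⟩
  · exact ⟨ofIsOpen hB β⟩
  · choose h1 hlt hA using hA
    choose δ hδ hγδ using fun n => Ordinal.exists_lt_eq_one_add (h1 n) (hlt n)
    exact ⟨iUnionCompl (fun n => (IH (δ n) (hδ n) (hγδ n ▸ hA n)).some) hδ⟩

end TreeRepresentation

theorem Sigma0_eq_BTTheta_general
    {X : Type*} [MetricSpace X]
    (β : Ordinal)
    (B : Set X) (hB : B ∈ Sigma0 X (1 + β)) :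
    ∃ (T : Set (List ℕ)) (Θ : Set (X × List ℕ)) (h : List ℕ → Ordinal) (BB : List ℕ → Set X),
      T.Nonempty ∧
      (∀ s t : List ℕ, s <+: t → t ∈ T → s ∈ T) ∧
      (¬ ∃ x : ℕ → ℕ, ∀ n : ℕ, List.ofFn (fun i : Fin n => x i) ∈ T) ∧
      (∀ t ∈ T, (∃ k : ℕ, t ++ [k] ∈ T) → ∀ m : ℕ, t ++ [m] ∈ T) ∧
      (∀ p ∈ Θ, p.2 ∈ T ∧ ∀ k : ℕ, p.2 ++ [k] ∉ T) ∧
      (∀ t : List ℕ, IsOpen {z : X | (z, t) ∈ Θ}) ∧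
      (∀ t ∈ T, h t = ⨆ k : {k : ℕ // t ++ [k] ∈ T}, (h (t ++ [k.1]) + 1)) ∧
      (∀ t ∈ T, (∀ k : ℕ, t ++ [k] ∉ T) → BB t = {z : X | (z, t) ∈ Θ}) ∧
      (∀ t ∈ T, (∃ k : ℕ, t ++ [k] ∈ T) →
        BB t = ⋃ k : ℕ, ⋃ (_ : t ++ [k] ∈ T), (BB (t ++ [k]))ᶜ) ∧
      h [] ≤ β ∧ BB [] = B := by
  obtain ⟨R⟩ := TreeRepresentation.nonempty_of_mem_Sigma0 hB
  exact ⟨R.T, R.Θ, R.h, R.BB, R.nonempty, R.prefix_mem, R.not_exists_branch,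
    R.append_mem_of_nonterminal, R.terminal_of_mem_Θ, R.isOpen_Θ, R.h_eq, R.BB_of_terminal,
    R.BB_of_nonterminal, R.h_nil_le, R.BB_nil⟩

/-- Every `Σ⁰_{1+β}` subset `B` of a metric space `X` is of the form `B^{T,Θ}(∅)` for a
nonempty well-founded tree `T` on `ℕ` (modelled as a set of lists closed under initial
segments and without infinite branches) with rank `h^T_∅ ≤ β` and a set `Θ ⊆ X × T_max`
with open sections; moreover `T` can be chosen so that every non-terminal node has all of
its one-step extensions in `T`.  Here `h` is the rank function of `T` (characterized by
`h t = sup { h (t ++ [k]) + 1 : t ++ [k] ∈ T }`) and `BB` is the family `B^{T,Θ}`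
(characterized by its defining recursion). -/
theorem Sigma0_eq_BTTheta
    {X : Type*} [MetricSpace X]
    (β : Ordinal) (hβ : β < (Cardinal.aleph 1).ord)
    (B : Set X) (hB : B ∈ Sigma0 X (1 + β)) :
    ∃ (T : Set (List ℕ)) (Θ : Set (X × List ℕ)) (h : List ℕ → Ordinal) (BB : List ℕ → Set X),
      T.Nonempty ∧
      (∀ s t : List ℕ, s <+: t → t ∈ T → s ∈ T) ∧
      (¬ ∃ x : ℕ → ℕ, ∀ n : ℕ, List.ofFn (fun i : Fin n => x i) ∈ T) ∧
      (∀ t ∈ T, (∃ k : ℕ, t ++ [k] ∈ T) → ∀ m : ℕ, t ++ [m] ∈ T) ∧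
      (∀ p ∈ Θ, p.2 ∈ T ∧ ∀ k : ℕ, p.2 ++ [k] ∉ T) ∧
      (∀ t : List ℕ, IsOpen {z : X | (z, t) ∈ Θ}) ∧
      (∀ t ∈ T, h t = ⨆ k : {k : ℕ // t ++ [k] ∈ T}, (h (t ++ [k.1]) + 1)) ∧
      (∀ t ∈ T, (∀ k : ℕ, t ++ [k] ∉ T) → BB t = {z : X | (z, t) ∈ Θ}) ∧
      (∀ t ∈ T, (∃ k : ℕ, t ++ [k] ∈ T) →
        BB t = ⋃ k : ℕ, ⋃ (_ : t ++ [k] ∈ T), (BB (t ++ [k]))ᶜ) ∧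
      h [] ≤ β ∧ BB [] = B :=
  Sigma0_eq_BTTheta_general β B hB
end

section
/- Let D ⊆ 2^ω be a countable set, let h : ω^ω → 2^ω be a topological embedding whose range is 2^ω ∖ D, and let F ⊆ 2^ω × ω^ω be a closed set such that every section F_x (x ∈ 2^ω) is countable. Then the closure K of the set {(x, h(y)) : (x,y) ∈ F} in 2^ω × 2^ω is compact and every section K_x (x ∈ 2^ω) is countable. -/
open Set Topology

section ClosureImageProdMap

variable {X Y Z : Type*} [TopologicalSpace X] [TopologicalSpace Y] [TopologicalSpace Z]
  {g : Y → Z} {F : Set (X × Y)}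

/-- Since `Prod.map id g` is inducing, the image of the closed set `F` is closed relative to
`X × range g`; so the closure of the image only adds points outside `X × range g`. -/
theorem Topology.IsInducing.mem_of_mk_mem_closure_image_prodMap (hg : IsInducing g)
    (hF : IsClosed F) {x : X} {y : Y} (hxy : (x, g y) ∈ closure (Prod.map id g '' F)) :
    (x, y) ∈ F := by
  have hpre := (IsInducing.id.prodMap hg).closure_eq_preimage_closure_image F
  rw [hF.closure_eq] at hpre
  rw [hpre]
  exact hxy

theorem Topology.IsInducing.setOf_mk_mem_closure_image_prodMap_subset (hg : IsInducing g)
    (hF : IsClosed F) (x : X) :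
    {z | (x, z) ∈ closure (Prod.map id g '' F)} ⊆ g '' {y | (x, y) ∈ F} ∪ (range g)ᶜ := by
  intro z hz
  by_cases hzg : z ∈ range g
  · obtain ⟨y, rfl⟩ := hzg
    exact Or.inl ⟨y, hg.mem_of_mk_mem_closure_image_prodMap hF hz, rfl⟩
  · exact Or.inr hzg

theorem Topology.IsInducing.countable_setOf_mk_mem_closure_image_prodMap (hg : IsInducing g)
    (hF : IsClosed F) (hgrange : (range g)ᶜ.Countable)
    (hFsec : ∀ x, {y | (x, y) ∈ F}.Countable) (x : X) :
    {z | (x, z) ∈ closure (Prod.map id g '' F)}.Countable :=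
  (((hFsec x).image g).union hgrange).mono (hg.setOf_mk_mem_closure_image_prodMap_subset hF x)

end ClosureImageProdMap

/-- If `D ⊆ 2^ω` is countable, `h : ω^ω → 2^ω` is a topological embedding with range
`2^ω ∖ D`, and `F ⊆ 2^ω × ω^ω` is closed with all sections countable, then the closure
`K` of `{(x, h y) : (x, y) ∈ F}` in `2^ω × 2^ω` is compact and all of its sections are
countable. -/
theorem closure_of_embedded_closed_set_compact_countable_sections
    (D : Set (ℕ → Bool)) (hD : D.Countable)
    (h : (ℕ → ℕ) → (ℕ → Bool)) (hemb : Topology.IsEmbedding h)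
    (hrange : Set.range h = Dᶜ)
    (F : Set ((ℕ → Bool) × (ℕ → ℕ))) (hFclosed : IsClosed F)
    (hFsec : ∀ x : ℕ → Bool, {y : ℕ → ℕ | (x, y) ∈ F}.Countable) :
    ∀ K : Set ((ℕ → Bool) × (ℕ → Bool)),
      K = closure ((fun p : (ℕ → Bool) × (ℕ → ℕ) => (p.1, h p.2)) '' F) →
      IsCompact K ∧ ∀ x : ℕ → Bool, {z : ℕ → Bool | (x, z) ∈ K}.Countable := by
  rintro K rfl
  have hcompl : (range h)ᶜ.Countable := by rwa [hrange, compl_compl]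
  exact ⟨isClosed_closure.isCompact,
    hemb.isInducing.countable_setOf_mk_mem_closure_image_prodMap hFclosed hcompl hFsec⟩
end
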